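/- arXiv:0705.2623 — 6 statements merged into one kernel-verified Lean document; each statement's English description precedes it below -/
import Mathlib

section
/- In the braid group B_n with the Dehornoy ordering, the ordering is discrete and σ₁ is the least positive element: for every β ∈ B_n with 1 < β, one has σ₁ ≤ β. -/
/-- The braid relations on generators indexed by `Fin m` (generator `i` is `σ_{i+1}`). -/
def braidRels (m : ℕ) : Set (FreeGroup (Fin m)) :=
  {r | (∃ i j : Fin m, (i : ℕ) + 1 < (j : ℕ) ∧
        r = FreeGroup.of i * FreeGroup.of j * (FreeGroup.of i)⁻¹ * (FreeGroup.of j)⁻¹) ∨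
       (∃ i j : Fin m, (i : ℕ) + 1 = (j : ℕ) ∧
        r = FreeGroup.of i * FreeGroup.of j * FreeGroup.of i *
            (FreeGroup.of j * FreeGroup.of i * FreeGroup.of j)⁻¹)}

/-- The Artin braid group `B_n`, presented with generators `σ₁, …, σ_{n-1}`. -/
abbrev BraidGroup (n : ℕ) := PresentedGroup (braidRels (n - 1))

/-- The Artin generator; `braidGen i` represents `σ_{i+1}`. -/
def braidGen {n : ℕ} (i : Fin (n - 1)) : BraidGroup n := PresentedGroup.of i

/-- `σ_k` (1-indexed), or `1` if out of range. -/
def sigma' (n k : ℕ) : BraidGroup n :=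
  if h : k - 1 < n - 1 then braidGen ⟨k - 1, h⟩ else 1

/-- A braid is `i`-positive (`i : Fin (n-1)` standing for `σ_{i+1}`) if it is represented by
a word using only generators of index ≤ i, in which generator `i` occurs, and only with
positive exponent. -/
def IsIPositive {n : ℕ} (β : BraidGroup n) (i : Fin (n - 1)) : Prop :=
  ∃ w : FreeGroup (Fin (n - 1)), PresentedGroup.mk (braidRels (n - 1)) w = β ∧
    (∀ l ∈ w.toWord, l.1 ≤ i ∧ (l.1 = i → l.2 = true)) ∧ (∃ l ∈ w.toWord, l.1 = i)

/-- A braid is `i`-negative if its inverse is `i`-positive. -/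
def IsINegative {n : ℕ} (β : BraidGroup n) (i : Fin (n - 1)) : Prop :=
  IsIPositive β⁻¹ i

/-- Dehornoy-positive braids: `i`-positive for some `i`. -/
def DPos {n : ℕ} (β : BraidGroup n) : Prop := ∃ i, IsIPositive β i

/-- The Dehornoy ordering on `B_n`. -/
def DLt {n : ℕ} (a b : BraidGroup n) : Prop := DPos (a⁻¹ * b)

/-- The copy of `B_r` inside `B_n` generated by `σ₁, …, σ_{r-1}`. -/
def braidSub (n r : ℕ) : Subgroup (BraidGroup n) :=
  Subgroup.closure {β | ∃ i : Fin (n - 1), (i : ℕ) < r - 1 ∧ β = braidGen i}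

/-- `σ_a σ_{a-1} ⋯ σ_b` (1-indexed). -/
def descSeg (n a b : ℕ) : BraidGroup n :=
  (((List.range (a - b + 1)).map fun j => sigma' n (a - j)).prod)

/-- The Garside half twist `Δ_k = (σ_{k-1}⋯σ₁)(σ_{k-1}⋯σ₂)⋯(σ_{k-1}σ_{k-2})(σ_{k-1})`
viewed in `B_n`. -/
def Delta (n k : ℕ) : BraidGroup n :=
  (((List.range (k - 1)).map fun m => descSeg n (k - 1) (m + 1)).prod)

/-!
If `β` is `i`-positive with `i > 1`, prefixing the witnessing word with `σ₁⁻¹` keeps it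
`i`-positive: free reduction only deletes pairs of mutually inverse letters, so it can never
delete a `σᵢ`, all of which occur positively. If `β` is `1`-positive it is a positive power
`σ₁ᵏ`, and `σ₁⁻¹β = σ₁ᵏ⁻¹` is either trivial or positive.
-/

namespace FreeGroup

variable {α : Type*}

theorem Red.Step.exists_mem_fst_eq {L₁ L₂ : List (α × Bool)} (h : Red.Step L₁ L₂) {x : α}
    (hpos : ∀ l ∈ L₁, l.1 = x → l.2 = true) (hx : ∃ l ∈ L₁, l.1 = x) :
    ∃ l ∈ L₂, l.1 = x := by
  obtain @⟨L, R, y, b⟩ := h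
  obtain ⟨l, hl, hlx⟩ := hx
  have hyx : y ≠ x := by
    rintro rfl
    have hb : b = true := hpos (y, b) (by simp) rfl
    have hnb : (!b) = true := hpos (y, !b) (by simp) rfl
    simp [hb] at hnb
  simp only [List.mem_append, List.mem_cons] at hl
  rcases hl with hl | rfl | rfl | hl
  · exact ⟨l, List.mem_append_left _ hl, hlx⟩
  · exact absurd hlx hyx
  · exact absurd hlx hyx
  · exact ⟨l, List.mem_append_right _ hl, hlx⟩

theorem Red.exists_mem_fst_eq {L₁ L₂ : List (α × Bool)} (h : Red L₁ L₂) {x : α}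
    (hpos : ∀ l ∈ L₁, l.1 = x → l.2 = true) (hx : ∃ l ∈ L₁, l.1 = x) :
    ∃ l ∈ L₂, l.1 = x := by
  induction h with
  | refl => exact hx
  | tail h₁₂ h₂₃ ih =>
    exact h₂₃.exists_mem_fst_eq (fun l hl => hpos l ((Red.sublist h₁₂).subset hl)) ih

end FreeGroup

section Braid

variable {n : ℕ}

theorem IsIPositive.mk_mul {β : BraidGroup n} {i : Fin (n - 1)} (hβ : IsIPositive β i)
    {v : FreeGroup (Fin (n - 1))} (hv : ∀ l ∈ v.toWord, l.1 < i) :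
    IsIPositive (PresentedGroup.mk (braidRels (n - 1)) v * β) i := by
  obtain ⟨w, rfl, hle, ⟨l, hl, hli⟩⟩ := hβ
  have hletters : ∀ l ∈ v.toWord ++ w.toWord, l.1 ≤ i ∧ (l.1 = i → l.2 = true) := by
    intro l hl
    rcases List.mem_append.mp hl with hl | hl
    · exact ⟨(hv l hl).le, fun h => absurd h (hv l hl).ne⟩
    · exact hle l hl
  refine ⟨v * w, map_mul _ _ _,
    fun l hl => hletters l ((FreeGroup.toWord_mul_sublist v w).subset hl), ?_⟩
  rw [FreeGroup.toWord_mul]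
  exact (FreeGroup.reduce.red).exists_mem_fst_eq (fun l hl => (hletters l hl).2)
    ⟨l, List.mem_append_right _ hl, hli⟩

theorem isIPositive_braidGen_pow (i : Fin (n - 1)) {k : ℕ} (hk : k ≠ 0) :
    IsIPositive (braidGen i ^ k) i := by
  refine ⟨FreeGroup.of i ^ k, map_pow _ _ _, ?_, ?_⟩ <;> rw [FreeGroup.toWord_of_pow]
  · intro l hl
    rw [List.eq_of_mem_replicate hl]
    exact ⟨le_rfl, fun _ => rfl⟩
  · exact ⟨(i, true), List.mem_replicate.mpr ⟨hk, rfl⟩, rfl⟩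

theorem IsIPositive.eq_braidGen_pow {β : BraidGroup n} (h : 0 < n - 1)
    (hβ : IsIPositive β ⟨0, h⟩) : ∃ k ≠ 0, β = braidGen ⟨0, h⟩ ^ k := by
  obtain ⟨w, rfl, hle, ⟨l, hl, -⟩⟩ := hβ
  have hw : w.toWord = List.replicate w.toWord.length (⟨0, h⟩, true) := by
    refine List.eq_replicate_iff.mpr ⟨rfl, fun l hl => ?_⟩
    have hl0 : l.1 = ⟨0, h⟩ := le_antisymm (hle l hl).1 (Fin.mk_le_mk.mpr (Nat.zero_le _))
    exact Prod.ext hl0 ((hle l hl).2 hl0)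
  have hpow : w = FreeGroup.of ⟨0, h⟩ ^ w.toWord.length :=
    FreeGroup.toWord_injective (by rw [FreeGroup.toWord_of_pow]; exact hw)
  exact ⟨_, (List.length_pos_of_mem hl).ne', (congrArg _ hpow).trans (map_pow _ _ _)⟩

end Braid

/-- The Dehornoy ordering of `B_n` is discrete with least positive element `σ₁`:
every Dehornoy-positive braid `β` satisfies `σ₁ ≤ β`.  (Dehornoy's theorem, that the
`i`-positive braids form the positive cone of a left-ordering, is taken as hypothesis.) -/
theorem stmt_6 {n : ℕ} (hn : 2 ≤ n) :
    DPos (braidGen (⟨0, by omega⟩ : Fin (n - 1))) ∧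
    ∀ β : BraidGroup n, DPos β →
      β = braidGen (⟨0, by omega⟩ : Fin (n - 1)) ∨
        DLt (braidGen (⟨0, by omega⟩ : Fin (n - 1))) β := by
  set i₀ : Fin (n - 1) := ⟨0, by omega⟩
  refine ⟨⟨i₀, by simpa using isIPositive_braidGen_pow i₀ one_ne_zero⟩, ?_⟩
  rintro β ⟨i, hβ⟩
  by_cases hi : i = i₀
  · subst hi
    obtain ⟨k, hk, rfl⟩ := hβ.eq_braidGen_pow _
    rcases eq_or_ne k 1 with rfl | hk1
    · exact Or.inl (pow_one _)
    refine Or.inr ⟨i₀, ?_⟩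
    rw [← mul_pow_sub_one hk, inv_mul_cancel_left]
    exact isIPositive_braidGen_pow i₀ (by omega)
  · refine Or.inr ⟨i, ?_⟩
    have hv : ∀ l ∈ (FreeGroup.of i₀)⁻¹.toWord, l.1 < i := by
      simp only [FreeGroup.toWord_inv, FreeGroup.toWord_of, FreeGroup.invRev, List.map,
        List.reverse_singleton, List.mem_singleton]
      rintro l rfl
      exact lt_of_le_of_ne (Fin.mk_le_mk.mpr (Nat.zero_le _)) (Ne.symm hi)
    exact hβ.mk_mul hv
end

section
/- Let n ≥ 3 and let N be a nontrivial normal subgroup of B_n with N ∩ B_{n-1} = 1. If the restriction of the Dehornoy ordering to N is discrete, then the least positive element of N lies in the centralizer of B_{n-1} in B_n. -/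
/-!
Every positive braid of `N` is represented by a word in which `σ_{n-1}` occurs only positively.
Conjugating by a word in `σ₁, …, σ_{n-2}` keeps this property; the result either still contains
`σ_{n-1}`, and is then `σ_{n-1}`-positive, or lies in `N ∩ B_{n-1} = 1`, which is impossible.
So conjugation by `B_{n-1}` preserves positivity on `N`. If `β` is least positive in `N` and
`g ∈ B_{n-1}`, then `gβg⁻¹ ≥ β` and `g⁻¹βg ≥ β`; conjugating the second inequality by `g` gives
`β ≥ gβg⁻¹`, hence `gβg⁻¹ = β`.
-/

theorem mem_centralizer_of_least_pos {G : Type*} [Group G] {P : G → Prop}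
    (hP : ∀ a, P a → ¬P a⁻¹) {N H : Subgroup G} (hN : N.Normal)
    (hconj : ∀ g ∈ H, ∀ δ ∈ N, P δ → P (g * δ * g⁻¹))
    {β : G} (hβN : β ∈ N) (hβ : P β) (hleast : ∀ γ ∈ N, P γ → γ = β ∨ P (β⁻¹ * γ)) :
    β ∈ Subgroup.centralizer (H : Set G) := by
  have hcompare : ∀ g ∈ H, g * β * g⁻¹ = β ∨ P (β⁻¹ * (g * β * g⁻¹)) := fun g hg =>
    hleast _ (hN.conj_mem β hβN g) (hconj g hg β hβN hβ)
  rw [Subgroup.mem_centralizer_iff]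
  intro g hg
  rcases hcompare g hg with hfix | hlt
  · calc g * β = g * β * g⁻¹ * g := by group
      _ = β * g := by rw [hfix]
  rcases hcompare g⁻¹ (inv_mem hg) with hfix' | hlt'
  · calc g * β = g * (g⁻¹ * β * g⁻¹⁻¹) := by rw [hfix']
      _ = β * g := by group
  have hmem : β⁻¹ * (g⁻¹ * β * g⁻¹⁻¹) ∈ N :=
    mul_mem (inv_mem hβN) (hN.conj_mem β hβN g⁻¹)
  refine absurd ?_ (hP _ hlt)
  convert hconj g hg _ hmem hlt' using 1
  group

namespace FreeGroup

variable {α : Type*} [DecidableEq α]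

theorem mem_closure_image_of_iff {s : Set α} {x : FreeGroup α} :
    x ∈ Subgroup.closure (of '' s) ↔ ∀ l ∈ x.toWord, l.1 ∈ s := by
  constructor
  · intro hx
    induction hx using Subgroup.closure_induction with
    | mem y hy =>
      obtain ⟨a, ha, rfl⟩ := hy
      simpa [toWord_of] using ha
    | one => simp
    | mul y z _ _ hy hz =>
      intro l hl
      rcases List.mem_append.mp ((toWord_mul_sublist y z).subset hl) with h | h
      exacts [hy l h, hz l h]
    | inv y _ hy =>
      intro l hl
      simp only [toWord_inv, invRev, List.mem_reverse, List.mem_map] at hl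
      obtain ⟨l', hl', rfl⟩ := hl
      exact hy l' hl'
  · intro hx
    suffices ∀ L : List (α × Bool), (∀ l ∈ L, l.1 ∈ s) → mk L ∈ Subgroup.closure (of '' s) by
      simpa only [mk_toWord] using this _ hx
    intro L
    induction L with
    | nil => simp [← one_eq_mk]
    | cons a L ih =>
      intro hL
      rw [← List.singleton_append, ← mul_mk]
      refine mul_mem ?_ (ih fun l hl => hL l (List.mem_cons_of_mem a hl))
      obtain ⟨a, b⟩ := a
      have hof : of a ∈ Subgroup.closure (of '' s) :=
        Subgroup.subset_closure ⟨a, hL _ List.mem_cons_self, rfl⟩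
      cases b
      · simpa [of, inv_mk, invRev] using inv_mem hof
      · exact hof

theorem mem_toWord_conj {s : Set α} {u : FreeGroup α} (hu : u ∈ Subgroup.closure (of '' s))
    (w : FreeGroup α) {l : α × Bool} (hl : l ∈ (u * w * u⁻¹).toWord) :
    l.1 ∈ s ∨ l ∈ w.toWord := by
  have hletters := fun x y => (toWord_mul_sublist (α := α) x y).subset
  rcases List.mem_append.mp (hletters _ _ hl) with h | h
  · rcases List.mem_append.mp (hletters _ _ h) with h | h
    · exact Or.inl (mem_closure_image_of_iff.mp hu l h)
    · exact Or.inr h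
  · exact Or.inl (mem_closure_image_of_iff.mp (inv_mem hu) l h)

end FreeGroup

open FreeGroup

theorem braidSub_eq_map_closure (n r : ℕ) :
    braidSub n r = (Subgroup.closure (of '' {i : Fin (n - 1) | (i : ℕ) < r - 1})).map
      (PresentedGroup.mk (braidRels (n - 1))) := by
  rw [braidSub, MonoidHom.map_closure, ← Set.image_comp]
  congr 1
  ext β
  simp [braidGen, PresentedGroup.of, eq_comm]

theorem mem_braidSub_iff {n r : ℕ} {g : BraidGroup n} :
    g ∈ braidSub n r ↔ ∃ u : FreeGroup (Fin (n - 1)),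
      u ∈ Subgroup.closure (of '' {i : Fin (n - 1) | (i : ℕ) < r - 1}) ∧
      PresentedGroup.mk (braidRels (n - 1)) u = g := by
  rw [braidSub_eq_map_closure, Subgroup.mem_map]

theorem DPos.exists_word_top_letters_pos {n : ℕ} {δ : BraidGroup n} (hδ : DPos δ) :
    ∃ w : FreeGroup (Fin (n - 1)), PresentedGroup.mk (braidRels (n - 1)) w = δ ∧
      ∀ l ∈ w.toWord, (l.1 : ℕ) = n - 2 → l.2 = true := by
  obtain ⟨i, w, hw, hletters, -⟩ := hδ
  refine ⟨w, hw, fun l hl htop => (hletters l hl).2 (Fin.ext ?_)⟩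
  have := Fin.le_def.mp (hletters l hl).1
  omega

theorem DPos.conj_or_mem_braidSub {n : ℕ} {g δ : BraidGroup n} (hg : g ∈ braidSub n (n - 1))
    (hδ : DPos δ) : DPos (g * δ * g⁻¹) ∨ g * δ * g⁻¹ ∈ braidSub n (n - 1) := by
  obtain ⟨w, rfl, hw⟩ := hδ.exists_word_top_letters_pos
  obtain ⟨u, hu, rfl⟩ := mem_braidSub_iff.mp hg
  rw [← _root_.map_inv, ← _root_.map_mul, ← _root_.map_mul]
  by_cases hlow : ∀ l ∈ (u * w * u⁻¹).toWord, (l.1 : ℕ) < n - 1 - 1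
  · exact Or.inr (mem_braidSub_iff.mpr ⟨_, mem_closure_image_of_iff.mpr hlow, rfl⟩)
  push Not at hlow
  obtain ⟨t, ht, httop⟩ := hlow
  have ht_lt := t.1.isLt
  refine Or.inl ⟨t.1, _, rfl, fun l hl => ⟨?_, fun hl_eq => ?_⟩, t, ht, rfl⟩
  · have := l.1.isLt
    exact Fin.le_def.mpr (by omega)
  · have htop : (l.1 : ℕ) = n - 2 := by rw [hl_eq]; omega
    rcases mem_toWord_conj hu w hl with hs | hl'
    · simp only [Set.mem_ofPred_eq] at hs
      omega
    · exact hw l hl' htop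

theorem DPos.conj_of_inf_braidSub_eq_bot {n : ℕ} {N : Subgroup (BraidGroup n)} (hN : N.Normal)
    (hNint : N ⊓ braidSub n (n - 1) = ⊥) (hone : ¬DPos (1 : BraidGroup n))
    {g δ : BraidGroup n} (hg : g ∈ braidSub n (n - 1)) (hδN : δ ∈ N) (hδ : DPos δ) :
    DPos (g * δ * g⁻¹) := by
  refine (hδ.conj_or_mem_braidSub hg).resolve_right fun hsub => hone ?_
  have hconj : g * δ * g⁻¹ ∈ N ⊓ braidSub n (n - 1) := ⟨hN.conj_mem δ hδN g, hsub⟩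
  rw [hNint, Subgroup.mem_bot, mul_inv_eq_one, mul_eq_left] at hconj
  rwa [← hconj]

theorem stmt_8_general {n : ℕ}
    (htri : ∀ a : BraidGroup n,
      (a = 1 ∧ ¬DPos a ∧ ¬DPos a⁻¹) ∨ (DPos a ∧ a ≠ 1 ∧ ¬DPos a⁻¹) ∨
      (DPos a⁻¹ ∧ a ≠ 1 ∧ ¬DPos a))
    (N : Subgroup (BraidGroup n)) (hNnormal : N.Normal)
    (hNint : N ⊓ braidSub n (n - 1) = ⊥)
    (β : BraidGroup n) (hβN : β ∈ N) (hβpos : DPos β)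
    (hβleast : ∀ γ : BraidGroup n, γ ∈ N → DPos γ → γ = β ∨ DLt β γ) :
    β ∈ Subgroup.centralizer (braidSub n (n - 1) : Set (BraidGroup n)) := by
  have hasymm : ∀ a : BraidGroup n, DPos a → ¬DPos a⁻¹ := fun a ha => by
    rcases htri a with h | h | h
    exacts [absurd ha h.2.1, h.2.2, absurd ha h.2.2]
  have hone : ¬DPos (1 : BraidGroup n) := by
    rcases htri 1 with h | h | h
    exacts [h.2.1, absurd rfl h.2.1, absurd rfl h.2.1]
  exact mem_centralizer_of_least_pos hasymm hNnormal
    (fun _ hg _ hδN hδ => DPos.conj_of_inf_braidSub_eq_bot hNnormal hNint hone hg hδN hδ)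
    hβN hβpos hβleast

/-- If `n ≥ 3`, `N ⊴ B_n` is nontrivial with `N ∩ B_{n-1} = 1`, and the Dehornoy ordering
restricted to `N` is discrete, then the least positive element of `N` lies in the
centralizer of `B_{n-1}` in `B_n`. -/
theorem stmt_8 {n : ℕ} (hn : 3 ≤ n)
    (hmul : ∀ a b : BraidGroup n, DPos a → DPos b → DPos (a * b))
    (htri : ∀ a : BraidGroup n,
      (a = 1 ∧ ¬DPos a ∧ ¬DPos a⁻¹) ∨ (DPos a ∧ a ≠ 1 ∧ ¬DPos a⁻¹) ∨
      (DPos a⁻¹ ∧ a ≠ 1 ∧ ¬DPos a))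
    (N : Subgroup (BraidGroup n)) (hNnormal : N.Normal) (hNnontriv : N ≠ ⊥)
    (hNint : N ⊓ braidSub n (n - 1) = ⊥)
    (β : BraidGroup n) (hβN : β ∈ N) (hβpos : DPos β)
    (hβleast : ∀ γ : BraidGroup n, γ ∈ N → DPos γ → γ = β ∨ DLt β γ) :
    β ∈ Subgroup.centralizer (braidSub n (n - 1) : Set (BraidGroup n)) :=
  stmt_8_general htri N hNnormal hNint β hβN hβpos hβleast
end

section
/- Let N ⊴ B_n be a nontrivial normal subgroup such that N ∩ B_{r-1} is nontrivial for all r ≥ 3 (equivalently N ∩ B_2 ≠ 1). Then N contains a positive power of σ₁, and the least positive element of N in the Dehornoy ordering exists and is a positive power of σ₁. -/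
namespace BraidAux

open FreeGroup

variable {α : Type*}

theorem step_preserve {i : α} {L₁ L₂ : List (α × Bool)}
    (h : FreeGroup.Red.Step L₁ L₂)
    (hpos : ∀ l ∈ L₁, l.1 = i → l.2 = true) (hmem : (i, true) ∈ L₁) :
    (i, true) ∈ L₂ := by
  cases h with
  | @not A B x b =>
    have hx : x ≠ i := by
      intro hxi
      have h1 := hpos (x, b) (by simp) hxi
      have h2 := hpos (x, !b) (by simp) hxi
      simp at h1 h2
      simp [h1] at h2
    simp only [List.mem_append, List.mem_cons] at hmem ⊢
    rcases hmem with h | h | h | h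
    · exact Or.inl h
    · exact absurd (congrArg Prod.fst h).symm hx
    · exact absurd (congrArg Prod.fst h).symm hx
    · exact Or.inr h

theorem red_preserve {i : α} {L₁ L₂ : List (α × Bool)}
    (h : FreeGroup.Red L₁ L₂)
    (hpos : ∀ l ∈ L₁, l.1 = i → l.2 = true) (hmem : (i, true) ∈ L₁) :
    (i, true) ∈ L₂ := by
  induction h with
  | refl => exact hmem
  | tail hr hs ih =>
    exact step_preserve hs (fun l hl h' => hpos l ((FreeGroup.Red.sublist hr).subset hl) h') ih

theorem mk_replicate_true (x : α) (m : ℕ) :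
    FreeGroup.mk (List.replicate m (x, true)) = (FreeGroup.of x) ^ m := by
  induction m with
  | zero => simp [FreeGroup.one_eq_mk]
  | succ m ih =>
    rw [List.replicate_succ, pow_succ']
    rw [show ((x, true) :: List.replicate m (x, true)) =
      [(x, true)] ++ List.replicate m (x, true) from rfl, ← FreeGroup.mul_mk, ih]
    rfl

theorem mk_replicate_false (x : α) (m : ℕ) :
    FreeGroup.mk (List.replicate m (x, false)) = ((FreeGroup.of x) ^ m)⁻¹ := by
  induction m with
  | zero => simp [FreeGroup.one_eq_mk]
  | succ m ih =>
    rw [List.replicate_succ, pow_succ, mul_inv_rev]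
    rw [show ((x, false) :: List.replicate m (x, false)) =
      [(x, false)] ++ List.replicate m (x, false) from rfl, ← FreeGroup.mul_mk, ih]
    congr 1

end BraidAux

namespace BraidAux

theorem sigma_eq {n : ℕ} (h0 : 0 < n - 1) : sigma' n 1 = braidGen ⟨0, h0⟩ := by
  rw [sigma', dif_pos]

theorem pos_pow {n : ℕ} (h0 : 0 < n - 1) (m : ℕ) (hm : 1 ≤ m) :
    IsIPositive (sigma' n 1 ^ m) ⟨0, h0⟩ := by
  refine ⟨FreeGroup.mk (List.replicate m ((⟨0, h0⟩ : Fin (n - 1)), true)), ?_, ?_, ?_⟩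
  · rw [mk_replicate_true, map_pow, sigma_eq h0]; rfl
  · intro l hl
    rw [FreeGroup.toWord_mk] at hl
    have h := List.eq_of_mem_replicate ((FreeGroup.Red.sublist FreeGroup.reduce.red).subset hl)
    rw [h]
    exact ⟨le_refl _, fun _ => rfl⟩
  · refine ⟨(⟨0, h0⟩, true), ?_, rfl⟩
    rw [FreeGroup.toWord_mk]
    apply red_preserve FreeGroup.reduce.red
    · intro l hl _
      rw [List.eq_of_mem_replicate hl]
    · exact List.mem_replicate.2 ⟨by omega, rfl⟩

theorem shifted {n : ℕ} (h0 : 0 < n - 1) {γ : BraidGroup n} {i : Fin (n - 1)}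
    (hi : 1 ≤ (i : ℕ)) (hγ : IsIPositive γ i) (u : ℕ) :
    IsIPositive ((sigma' n 1 ^ u)⁻¹ * γ) i := by
  obtain ⟨w, hw, hP, l0, hl0, hl0i⟩ := hγ
  have hl0t : l0 = (i, true) := by
    have h2 := (hP l0 hl0).2 hl0i
    obtain ⟨a, b⟩ := l0
    simp only at hl0i h2
    rw [hl0i, h2]
  refine ⟨FreeGroup.mk (List.replicate u ((⟨0, h0⟩ : Fin (n - 1)), false) ++ w.toWord),
    ?_, ?_, ?_⟩
  · rw [← FreeGroup.mul_mk, map_mul, mk_replicate_false, map_inv, map_pow,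
      FreeGroup.mk_toWord, hw, sigma_eq h0]
    rfl
  · intro l hl
    rw [FreeGroup.toWord_mk] at hl
    have hl' := (FreeGroup.Red.sublist FreeGroup.reduce.red).subset hl
    rcases List.mem_append.1 hl' with h | h
    · rw [List.eq_of_mem_replicate h]
      refine ⟨Fin.mk_le_of_le_val (Nat.zero_le _), fun h' => ?_⟩
      exfalso
      have := congrArg Fin.val h'
      simp only [Fin.val_mk] at this
      omega
    · exact hP l h
  · refine ⟨(i, true), ?_, rfl⟩
    rw [FreeGroup.toWord_mk]
    apply red_preserve FreeGroup.reduce.red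
    · intro l hl hi'
      rcases List.mem_append.1 hl with h | h
      · exfalso
        have h2 := List.eq_of_mem_replicate h
        have h3 := congrArg Fin.val (h2 ▸ hi' : l.1 = i)
        rw [h2] at h3
        simp only [Fin.val_mk] at h3
        omega
      · exact (hP l h).2 hi'
    · exact List.mem_append.2 (Or.inr (hl0t ▸ hl0))

theorem zero_case {n : ℕ} (h0 : 0 < n - 1) {γ : BraidGroup n}
    (hγ : IsIPositive γ ⟨0, h0⟩) : ∃ j : ℕ, 1 ≤ j ∧ γ = sigma' n 1 ^ j := by
  obtain ⟨w, hw, hP, l0, hl0, _⟩ := hγ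
  have hall : ∀ l ∈ w.toWord, l = ((⟨0, h0⟩ : Fin (n - 1)), true) := by
    intro l hl
    obtain ⟨h1, h2⟩ := hP l hl
    have hfst : l.1 = ⟨0, h0⟩ := by
      apply Fin.ext
      have := Fin.le_def.1 h1
      simp only [Fin.val_mk] at this ⊢
      omega
    obtain ⟨a, b⟩ := l
    have hb : b = true := h2 hfst
    simp only at hfst ⊢
    rw [hfst, hb]
  have hrep := List.eq_replicate_of_mem hall
  refine ⟨w.toWord.length, ?_, ?_⟩
  · have h1 : w.toWord ≠ [] := List.ne_nil_of_mem hl0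
    have := List.length_pos_iff.2 h1
    omega
  · rw [← hw]
    conv_lhs => rw [← FreeGroup.mk_toWord (x := w), hrep]
    rw [mk_replicate_true, map_pow, sigma_eq h0]
    rfl

end BraidAux

/-- If `N ⊴ B_n` is nontrivial and meets every `B_{r-1}`, `r ≥ 3` (equivalently
`N ∩ B₂ ≠ 1`), then `N` contains a positive power of `σ₁` and its least positive element
(in the Dehornoy ordering) exists and is a positive power of `σ₁`. -/
theorem stmt_10 {n : ℕ} (hn : 2 ≤ n)
    (hmul : ∀ a b : BraidGroup n, DPos a → DPos b → DPos (a * b))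
    (htri : ∀ a : BraidGroup n,
      (a = 1 ∧ ¬DPos a ∧ ¬DPos a⁻¹) ∨ (DPos a ∧ a ≠ 1 ∧ ¬DPos a⁻¹) ∨
      (DPos a⁻¹ ∧ a ≠ 1 ∧ ¬DPos a))
    (N : Subgroup (BraidGroup n)) (hNnormal : N.Normal) (hNnontriv : N ≠ ⊥)
    (hNint : ∀ r : ℕ, 3 ≤ r → N ⊓ braidSub n (r - 1) ≠ ⊥) :
    (∃ m : ℕ, 1 ≤ m ∧ sigma' n 1 ^ m ∈ N) ∧
    ∃ u : ℕ, 1 ≤ u ∧ sigma' n 1 ^ u ∈ N ∧ DPos (sigma' n 1 ^ u) ∧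
      ∀ γ : BraidGroup n, γ ∈ N → DPos γ → γ = sigma' n 1 ^ u ∨ DLt (sigma' n 1 ^ u) γ := by
  classical
  have h0 : 0 < n - 1 := by omega
  have hσ : sigma' n 1 = braidGen ⟨0, h0⟩ := BraidAux.sigma_eq h0
  have hint := hNint 3 (by norm_num)
  rw [Ne, Subgroup.eq_bot_iff_forall] at hint
  push_neg at hint
  obtain ⟨x, hxmem, hx1⟩ := hint
  obtain ⟨hxN, hxB⟩ := Subgroup.mem_inf.1 hxmem
  have hsub : braidSub n (3 - 1) = Subgroup.closure {braidGen (⟨0, h0⟩ : Fin (n - 1))} := by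
    unfold braidSub
    congr 1
    ext β
    simp only [Set.mem_setOf_eq, Set.mem_singleton_iff]
    constructor
    · rintro ⟨i, hi, rfl⟩
      have : (i : ℕ) = 0 := by omega
      congr 1
      exact Fin.ext this
    · rintro rfl
      exact ⟨⟨0, h0⟩, by norm_num, rfl⟩
  rw [hsub, Subgroup.mem_closure_singleton] at hxB
  obtain ⟨k, hk⟩ := hxB
  have hk0 : k ≠ 0 := by
    rintro rfl
    simp only [zpow_zero] at hk
    exact hx1 hk.symm
  have hpart1 : ∃ m : ℕ, 1 ≤ m ∧ sigma' n 1 ^ m ∈ N := by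
    refine ⟨k.natAbs, by omega, ?_⟩
    rcases Int.natAbs_eq k with h | h
    · have e : sigma' n 1 ^ k.natAbs = x := by
        rw [hσ, ← zpow_natCast, ← h, hk]
      rw [e]; exact hxN
    · have e : sigma' n 1 ^ k.natAbs = x⁻¹ := by
        rw [h, zpow_neg] at hk
        rw [hσ, ← zpow_natCast, ← hk, inv_inv]
      rw [e]; exact inv_mem hxN
  refine ⟨hpart1, ?_⟩
  obtain ⟨hu1, huN⟩ := Nat.find_spec hpart1
  set u := Nat.find hpart1 with hu
  refine ⟨u, hu1, huN, ⟨⟨0, h0⟩, BraidAux.pos_pow h0 u hu1⟩, ?_⟩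
  intro γ hγN hγpos
  rcases htri ((sigma' n 1 ^ u)⁻¹ * γ) with ⟨he, -, -⟩ | ⟨hp, -, -⟩ | ⟨hpi, hne, hnp⟩
  · left
    exact (inv_mul_eq_one.1 he).symm
  · right
    exact hp
  · exfalso
    obtain ⟨i, hi⟩ := hγpos
    by_cases hiz : (i : ℕ) = 0
    · have hieq : i = ⟨0, h0⟩ := Fin.ext hiz
      obtain ⟨j, hj1, hje⟩ := BraidAux.zero_case h0 (hieq ▸ hi)
      have hjN : sigma' n 1 ^ j ∈ N := hje ▸ hγN
      have huj : u ≤ j := Nat.find_min' hpart1 ⟨hj1, hjN⟩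
      rcases eq_or_lt_of_le huj with h | h
      · apply hne
        rw [hje, ← h, inv_mul_cancel]
      · apply hnp
        have e : (sigma' n 1 ^ u)⁻¹ * γ = sigma' n 1 ^ (j - u) := by
          rw [inv_mul_eq_iff_eq_mul, hje, ← pow_add, Nat.add_sub_cancel' (le_of_lt h)]
        rw [e]
        exact ⟨⟨0, h0⟩, BraidAux.pos_pow h0 (j - u) (by omega)⟩
    · exact hnp ⟨i, BraidAux.shifted h0 (by omega) hi u⟩
end

section
/- The centralizer of B_2 in B_3 consists exactly of the elements (σ₂σ₁²σ₂)^p σ₁^q for p, q ∈ ℤ, and this centralizer is isomorphic to ℤ × ℤ. -/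
/-!
Put `Δ = σ₁σ₂σ₁` and `δ = σ₁σ₂`. Then `σ₁ = δ⁻¹Δ`, `σ₂ = Δ⁻¹δ²`, and `Δ² = δ³` is central, so
every braid is `Δ^{2k}` times an alternating word in the syllables `Δ` and `δ, δ²`. This form is
unique: `B₃` acts on the set of such pairs `(k, word)`, with `Δ` and `δ` acting by left
multiplication, and evaluating the pair back in `B₃` is equivariant (van der Waerden's trick).

Since `σ₁ = Δ⁻²δ²Δ = δ²ΔΔ⁻²`, the normal forms of `σ₁ w` and `w σ₁` can be read off from the first
and the last syllables of `w`. When `w` commutes with `σ₁` they agree, and this forces `w` to be a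
power of `δ²Δ = Δ²σ₁` or of `Δδ = Δ²σ₁⁻¹`. So the centralizer of `σ₁` is `{Δ^{2p} σ₁^q}`, free
abelian on `Δ²` and `σ₁`; finally `σ₂σ₁²σ₂ = Δ²σ₁⁻²`.
-/

theorem List.exists_eq_flatten_replicate_of_cons_cons_eq_append {α : Type*} {c d : α}
    (hcd : c ≠ d) : ∀ {l : List α}, c :: d :: l = l ++ [c, d] →
      ∃ n, l = (List.replicate n [c, d]).flatten
  | [], _ => ⟨0, rfl⟩
  | [_], h => by simp at h; exact absurd h.2.1.symm hcd
  | e :: f :: t, h => by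
    simp only [List.cons_append, List.cons.injEq] at h
    obtain ⟨rfl, rfl, h⟩ := h
    obtain ⟨n, rfl⟩ := exists_eq_flatten_replicate_of_cons_cons_eq_append hcd h
    exact ⟨n + 1, by simp [List.replicate_succ]⟩

theorem Function.Bijective.of_iterate_succ {α : Type*} {f : α → α} {n : ℕ}
    (h : (f^[n + 1]).Bijective) : f.Bijective :=
  ⟨(Function.iterate_succ f n ▸ h.1).of_comp, (Function.iterate_succ' f n ▸ h.2).of_comp⟩

section Group

variable {G : Type*} [Group G]

theorem mul_mul_eq_of_sq_eq_pow_three {u v : G} (h : u ^ 2 = v ^ 3) :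
    v⁻¹ * u * (u⁻¹ * v ^ 2) * (v⁻¹ * u) = u⁻¹ * v ^ 2 * (v⁻¹ * u) * (u⁻¹ * v ^ 2) :=
  calc _ = u := by group
    _ = u⁻¹ * v ^ 3 := by rw [← h]; group
    _ = _ := by group

def Commute.zpowPairHom {g h : G} (hc : Commute g h) : Multiplicative (ℤ × ℤ) →* G :=
  ((zpowersHom G g).noncommCoprod (zpowersHom G h) fun _ _ => hc.zpow_zpow _ _).comp
    (MulEquiv.prodMultiplicative (G := ℤ) (H := ℤ)).toMonoidHom

end Group

namespace Braid3

local notation "σ₁" => sigma' 3 1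
local notation "σ₂" => sigma' 3 2

theorem σ₁_mul_σ₂_mul_σ₁ : σ₁ * σ₂ * σ₁ = σ₂ * σ₁ * σ₂ :=
  PresentedGroup.mk_eq_mk_of_mul_inv_mem (Or.inr ⟨0, 1, rfl, rfl⟩)

def Δ : BraidGroup 3 := σ₁ * σ₂ * σ₁

def δ : BraidGroup 3 := σ₁ * σ₂

theorem Δ_sq : Δ ^ 2 = δ ^ 3 :=
  calc Δ ^ 2 = σ₁ * σ₂ * σ₁ * (σ₂ * σ₁ * σ₂) := by
        rw [sq, Δ]; nth_rewrite 2 [σ₁_mul_σ₂_mul_σ₁]; rfl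
    _ = δ ^ 3 := by simp only [δ, pow_succ, pow_zero, one_mul, mul_assoc]

theorem σ₁_eq : σ₁ = δ⁻¹ * Δ := by rw [Δ, δ]; group

theorem σ₂_eq : σ₂ = Δ⁻¹ * δ ^ 2 := by rw [Δ, δ, sq]; group

theorem σ₁_mul_Δ : σ₁ * Δ = δ ^ 2 := by rw [σ₁_eq, mul_assoc, ← sq, Δ_sq]; group

theorem σ₁_eq_inv_Δ_sq_mul : σ₁ = (Δ ^ 2)⁻¹ * (δ ^ 2 * Δ) := by rw [Δ_sq, σ₁_eq]; group

theorem σ₁_eq_mul_inv_Δ_sq : σ₁ = δ ^ 2 * Δ * (Δ ^ 2)⁻¹ := by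
  rw [eq_mul_inv_of_mul_eq σ₁_mul_Δ]; group

theorem closure_Δ_δ : Subgroup.closure {Δ, δ} = ⊤ := by
  rw [eq_top_iff, ← PresentedGroup.closure_range_of, Subgroup.closure_le]
  rintro _ ⟨i, rfl⟩
  have hΔ : Δ ∈ Subgroup.closure {Δ, δ} := Subgroup.subset_closure (by simp)
  have hδ : δ ∈ Subgroup.closure {Δ, δ} := Subgroup.subset_closure (by simp)
  fin_cases i
  · change σ₁ ∈ _
    exact σ₁_eq ▸ mul_mem (inv_mem hδ) hΔ
  · change σ₂ ∈ _
    exact σ₂_eq ▸ mul_mem (inv_mem hΔ) (pow_mem hδ 2)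

theorem commute_Δ_sq (w : BraidGroup 3) : Commute (Δ ^ 2) w := by
  have h : Δ ^ 2 ∈ Subgroup.centralizer (Subgroup.closure {Δ, δ} : Set (BraidGroup 3)) := by
    rw [Subgroup.centralizer_closure]
    rintro _ (rfl | rfl)
    · exact (Commute.self_pow _ 2).eq
    · rw [Δ_sq]; exact (Commute.self_pow _ 3).eq
  rw [closure_Δ_δ] at h
  exact (h w trivial).symm

theorem commute_Δ_sq_zpow (k : ℤ) (w : BraidGroup 3) : Commute ((Δ ^ 2) ^ k) w :=
  (commute_Δ_sq w).zpow_left k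

section Lift

variable {G : Type*} [Group G] {u v : G}

def liftOfSqEqPowThree (h : u ^ 2 = v ^ 3) : BraidGroup 3 →* G :=
  PresentedGroup.toGroup (f := (![v⁻¹ * u, u⁻¹ * v ^ 2] : Fin 2 → G)) <| by
    rintro r (⟨i, j, hij, rfl⟩ | ⟨i, j, hij, rfl⟩)
    · omega
    · have := j.isLt
      obtain rfl : i = 0 := Fin.ext (by simp; omega)
      obtain rfl : j = 1 := Fin.ext (by simp; omega)
      simp only [map_mul, map_inv, FreeGroup.lift_apply_of, Matrix.cons_val_zero,
        Matrix.cons_val_one, mul_inv_eq_one]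
      exact mul_mul_eq_of_sq_eq_pow_three h

variable (h : u ^ 2 = v ^ 3)

theorem liftOfSqEqPowThree_σ₁ : liftOfSqEqPowThree h σ₁ = v⁻¹ * u :=
  PresentedGroup.toGroup.of _

theorem liftOfSqEqPowThree_σ₂ : liftOfSqEqPowThree h σ₂ = u⁻¹ * v ^ 2 :=
  PresentedGroup.toGroup.of _

theorem liftOfSqEqPowThree_Δ : liftOfSqEqPowThree h Δ = u := by
  simp only [Δ, map_mul, liftOfSqEqPowThree_σ₁, liftOfSqEqPowThree_σ₂]; group

theorem liftOfSqEqPowThree_δ : liftOfSqEqPowThree h δ = v := by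
  simp only [δ, map_mul, liftOfSqEqPowThree_σ₁, liftOfSqEqPowThree_σ₂]; group

end Lift

inductive Syllable
  | x
  | y
  | y2

namespace Syllable

def value : Syllable → BraidGroup 3
  | x => Δ
  | y => δ
  | y2 => δ ^ 2

def isX : Syllable → Bool
  | x => true
  | _ => false

end Syllable

open Syllable

def IsReduced (l : List Syllable) : Prop := l.IsChain fun s t => s.isX ≠ t.isX

theorem isReduced_nil : IsReduced [] := List.isChain_nil

theorem isReduced_reverse {l : List Syllable} : IsReduced l.reverse ↔ IsReduced l := by
  simp only [IsReduced, List.isChain_reverse, ne_comm]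

def word (l : List Syllable) : BraidGroup 3 := (l.map value).prod

@[simp] theorem word_nil : word [] = 1 := rfl

@[simp] theorem word_cons (c : Syllable) (l : List Syllable) : word (c :: l) = c.value * word l :=
  List.prod_cons

@[simp] theorem word_append (l₁ l₂ : List Syllable) : word (l₁ ++ l₂) = word l₁ * word l₂ := by
  simp [word]

theorem word_flatten_replicate (c d : Syllable) (n : ℕ) :
    word (List.replicate n [c, d]).flatten = (c.value * d.value) ^ n := by
  simp [word, List.map_flatten, List.prod_flatten, List.map_replicate, List.prod_replicate]

def eval (p : ℤ × List Syllable) : BraidGroup 3 := (Δ ^ 2) ^ p.1 * word p.2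

theorem eval_eq_word_mul (p : ℤ × List Syllable) : eval p = word p.2 * (Δ ^ 2) ^ p.1 :=
  (commute_Δ_sq_zpow _ _).eq

def stepX : ℤ × List Syllable → ℤ × List Syllable
  | (k, x :: l) => (k + 1, l)
  | (k, l) => (k, x :: l)

def stepY : ℤ × List Syllable → ℤ × List Syllable
  | (k, y :: l) => (k, y2 :: l)
  | (k, y2 :: l) => (k + 1, l)
  | (k, l) => (k, y :: l)

theorem IsReduced.stepX {p : ℤ × List Syllable} (h : IsReduced p.2) :
    IsReduced (stepX p).2 := by
  rcases p with ⟨k, _ | ⟨_ | _ | _, _ | ⟨_ | _ | _, t⟩⟩⟩ <;>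
    simp_all [Braid3.stepX, IsReduced, isX]

theorem IsReduced.stepY {p : ℤ × List Syllable} (h : IsReduced p.2) :
    IsReduced (stepY p).2 := by
  rcases p with ⟨k, _ | ⟨_ | _ | _, _ | ⟨_ | _ | _, t⟩⟩⟩ <;>
    simp_all [Braid3.stepY, IsReduced, isX]

theorem stepX_stepX {p : ℤ × List Syllable} (h : IsReduced p.2) :
    stepX (stepX p) = (p.1 + 1, p.2) := by
  rcases p with ⟨k, _ | ⟨_ | _ | _, _ | ⟨_ | _ | _, t⟩⟩⟩ <;> simp_all [stepX, IsReduced, isX]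

theorem stepY_stepY_stepY {p : ℤ × List Syllable} (h : IsReduced p.2) :
    stepY (stepY (stepY p)) = (p.1 + 1, p.2) := by
  rcases p with ⟨k, _ | ⟨_ | _ | _, _ | ⟨_ | _ | _, t⟩⟩⟩ <;> simp_all [stepY, IsReduced, isX]

theorem mul_zpow_Δ_sq_mul (g : BraidGroup 3) (k : ℤ) (w : BraidGroup 3) :
    g * ((Δ ^ 2) ^ k * w) = (Δ ^ 2) ^ k * (g * w) :=
  ((commute_Δ_sq_zpow k g).left_comm w).symm

theorem eval_stepX (p : ℤ × List Syllable) : eval (stepX p) = Δ * eval p := by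
  rcases p with ⟨k, _ | ⟨_ | _ | _, l⟩⟩ <;>
    simp only [stepX, eval, word_cons, word_nil, value, mul_zpow_Δ_sq_mul]
  rw [zpow_add_one, mul_assoc, ← mul_assoc Δ, ← sq]

theorem eval_stepY (p : ℤ × List Syllable) : eval (stepY p) = δ * eval p := by
  rcases p with ⟨k, _ | ⟨_ | _ | _, l⟩⟩ <;>
    simp only [stepY, eval, word_cons, word_nil, value, mul_zpow_Δ_sq_mul]
  · rw [sq δ, mul_assoc]
  · rw [zpow_add_one, mul_assoc, ← mul_assoc δ, Δ_sq, pow_succ' δ 2]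

abbrev NormalForm := {p : ℤ × List Syllable // IsReduced p.2}

namespace NormalForm

def base : NormalForm := ⟨(0, []), isReduced_nil⟩

def shift : Equiv.Perm NormalForm where
  toFun p := ⟨(p.1.1 + 1, p.1.2), p.2⟩
  invFun p := ⟨(p.1.1 - 1, p.1.2), p.2⟩
  left_inv p := by simp
  right_inv p := by simp

theorem shift_zpow_apply (k : ℤ) (p : NormalForm) :
    ((shift ^ k) p).1 = (p.1.1 + k, p.1.2) := by
  induction k using Int.induction_on generalizing p with
  | zero => simp
  | succ n ih => rw [zpow_add_one, Equiv.Perm.mul_apply, ih]; simp [shift]; ring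
  | pred n ih => rw [zpow_sub_one, Equiv.Perm.mul_apply, ih]; simp [shift]; ring

def mapX (p : NormalForm) : NormalForm := ⟨stepX p.1, p.2.stepX⟩

def mapY (p : NormalForm) : NormalForm := ⟨stepY p.1, p.2.stepY⟩

theorem mapX_iterate_two : mapX^[2] = shift := funext fun p => Subtype.ext (stepX_stepX p.2)

theorem mapY_iterate_three : mapY^[3] = shift :=
  funext fun p => Subtype.ext (stepY_stepY_stepY p.2)

noncomputable def permX : Equiv.Perm NormalForm :=
  Equiv.ofBijective mapX (.of_iterate_succ (n := 1) (mapX_iterate_two ▸ shift.bijective))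

noncomputable def permY : Equiv.Perm NormalForm :=
  Equiv.ofBijective mapY (.of_iterate_succ (n := 2) (mapY_iterate_three ▸ shift.bijective))

theorem permX_sq : permX ^ 2 = shift := by
  ext1 p; rw [Equiv.Perm.coe_pow]; exact congrFun mapX_iterate_two p

theorem permY_pow_three : permY ^ 3 = shift := by
  ext1 p; rw [Equiv.Perm.coe_pow]; exact congrFun mapY_iterate_three p

end NormalForm

open NormalForm

noncomputable def act : BraidGroup 3 →* Equiv.Perm NormalForm :=
  liftOfSqEqPowThree (permX_sq.trans permY_pow_three.symm)

theorem act_Δ : act Δ = permX := liftOfSqEqPowThree_Δ _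

theorem act_δ : act δ = permY := liftOfSqEqPowThree_δ _

theorem eval_act (w : BraidGroup 3) (p : NormalForm) : eval (act w p).1 = w * eval p.1 := by
  have hw : w ∈ Subgroup.closure {Δ, δ} := closure_Δ_δ ▸ Subgroup.mem_top w
  induction hw using Subgroup.closure_induction generalizing p with
  | mem g hg =>
    rcases hg with rfl | rfl
    · rw [act_Δ]; exact eval_stepX p.1
    · rw [act_δ]; exact eval_stepY p.1
  | one => simp
  | mul g h _ _ ihg ihh => rw [map_mul, Equiv.Perm.mul_apply, ihg, ihh, mul_assoc]
  | inv g _ ih =>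
    rw [eq_inv_mul_iff_mul_eq, ← ih, map_inv, Equiv.Perm.coe_inv, Equiv.apply_symm_apply]

theorem act_value_apply {c : Syllable} {k : ℤ} {l : List Syllable} (hl : IsReduced l)
    (h : IsReduced (c :: l)) : (act c.value ⟨(k, l), hl⟩).1 = (k, c :: l) := by
  cases c
  · rw [value, act_Δ]
    change stepX (k, l) = _
    rcases l with _ | ⟨_ | _ | _, t⟩ <;> simp_all [stepX, IsReduced, isX]
  · rw [value, act_δ]
    change stepY (k, l) = _
    rcases l with _ | ⟨_ | _ | _, t⟩ <;> simp_all [stepY, IsReduced, isX]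
  · rw [value, map_pow, act_δ, sq, Equiv.Perm.mul_apply]
    change stepY (stepY (k, l)) = _
    rcases l with _ | ⟨_ | _ | _, t⟩ <;> simp_all [stepY, IsReduced, isX]

theorem act_word_base {l : List Syllable} (h : IsReduced l) : (act (word l) base).1 = (0, l) := by
  induction l with
  | nil => simp [base]
  | cons c t ih =>
    have ht : IsReduced t := List.IsChain.tail h
    have : act (word t) base = ⟨(0, t), ht⟩ := Subtype.ext (ih ht)
    rw [word_cons, map_mul, Equiv.Perm.mul_apply, this, act_value_apply ht h]

noncomputable def nf (w : BraidGroup 3) : ℤ × List Syllable := (act w base).1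

theorem eval_nf (w : BraidGroup 3) : eval (nf w) = w := by
  rw [nf, eval_act]
  simp [base, eval]

theorem nf_eval {p : ℤ × List Syllable} (h : IsReduced p.2) : nf (eval p) = p := by
  rw [nf, eval, map_mul, Equiv.Perm.mul_apply, map_zpow, map_pow, act_Δ, permX_sq,
    shift_zpow_apply, act_word_base h]
  simp

theorem exists_eq_eval (w : BraidGroup 3) :
    ∃ p : ℤ × List Syllable, IsReduced p.2 ∧ eval p = w :=
  ⟨nf w, (act w base).2, eval_nf w⟩

theorem eval_inj {p q : ℤ × List Syllable} (hp : IsReduced p.2) (hq : IsReduced q.2) :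
    eval p = eval q ↔ p = q :=
  ⟨fun h => by rw [← nf_eval hp, h, nf_eval hq], congrArg eval⟩

def nfσ₁Mul : List Syllable → ℤ × List Syllable
  | x :: y :: s => (1, s)
  | x :: y2 :: s => (1, y :: s)
  | [x] => (0, [y2])
  | l => (-1, y2 :: x :: l)

def nfMulσ₁ (l : List Syllable) : ℤ × List Syllable :=
  match l.reverse with
  | y :: x :: s => (1, s.reverse)
  | y2 :: s => (0, s.reverse ++ [y, x])
  | [y] => (0, [x])
  | _ => (-1, l ++ [y2, x])

theorem σ₁_mul_word (l : List Syllable) : σ₁ * word l = eval (nfσ₁Mul l) := by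
  rcases l with _ | ⟨_ | _ | _, _ | ⟨_ | _ | _, s⟩⟩ <;>
    simp only [nfσ₁Mul, eval, word_cons, word_nil, value] <;>
    first
    | (rw [σ₁_eq_inv_Δ_sq_mul]; group; done)
    | (rw [← mul_assoc, σ₁_mul_Δ, Δ_sq]; group)

theorem word_mul_σ₁ (l : List Syllable) : word l * σ₁ = eval (nfMulσ₁ l) := by
  obtain ⟨r, rfl⟩ : ∃ r, l = List.reverse r := ⟨l.reverse, l.reverse_reverse.symm⟩
  rcases r with _ | ⟨_ | _ | _, _ | ⟨_ | _ | _, s⟩⟩ <;>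
    simp only [nfMulσ₁, List.reverse_reverse] <;>
    simp only [eval_eq_word_mul, List.reverse_cons, List.reverse_nil, word_append, word_cons,
      word_nil, value] <;>
    first
    | (rw [σ₁_eq]; simp only [sq]; group; done)
    | (rw [σ₁_eq_mul_inv_Δ_sq]; group)

theorem IsReduced.nfσ₁Mul {l : List Syllable} (hl : IsReduced l) : IsReduced (nfσ₁Mul l).2 := by
  rcases l with _ | ⟨_ | _ | _, _ | ⟨_ | _ | _, _ | ⟨_ | _ | _, s⟩⟩⟩ <;>
    simp_all [Braid3.nfσ₁Mul, IsReduced, isX]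

theorem IsReduced.nfMulσ₁ {l : List Syllable} (hl : IsReduced l) : IsReduced (nfMulσ₁ l).2 := by
  obtain ⟨r, rfl⟩ : ∃ r, l = List.reverse r := ⟨l.reverse, l.reverse_reverse.symm⟩
  rw [isReduced_reverse] at hl
  rcases r with _ | ⟨_ | _ | _, _ | ⟨_ | _ | _, _ | ⟨_ | _ | _, s⟩⟩⟩ <;>
    simp only [Braid3.nfMulσ₁, List.reverse_reverse] <;>
    rw [← isReduced_reverse] <;> simp_all [IsReduced, isX]

theorem nfσ₁Mul_cases (l : List Syllable) :
    nfσ₁Mul l = (-1, y2 :: x :: l) ∨ (∃ s, l = x :: y :: s ∧ nfσ₁Mul l = (1, s)) ∨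
      (∃ s, l = x :: y2 :: s ∧ nfσ₁Mul l = (1, y :: s)) ∨ (l = [x] ∧ nfσ₁Mul l = (0, [y2])) := by
  unfold nfσ₁Mul; split <;> simp

theorem nfMulσ₁_cases (l : List Syllable) :
    nfMulσ₁ l = (-1, l ++ [y2, x]) ∨ (∃ s, l = s ++ [x, y] ∧ nfMulσ₁ l = (1, s)) ∨
      (∃ s, l = s ++ [y2] ∧ nfMulσ₁ l = (0, s ++ [y, x])) ∨
      (l = [y] ∧ nfMulσ₁ l = (0, [x])) := by
  unfold nfMulσ₁
  split <;> rename_i heq <;> simp [List.reverse_eq_cons_iff] at heq ⊢ <;> simp [heq]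

theorem eq_flatten_replicate_of_nfσ₁Mul_eq_nfMulσ₁ {l : List Syllable}
    (h : nfσ₁Mul l = nfMulσ₁ l) :
    (∃ n, l = (List.replicate n [y2, x]).flatten) ∨ ∃ n, l = (List.replicate n [x, y]).flatten := by
  rcases nfσ₁Mul_cases l with h₁ | ⟨s, hs, h₁⟩ | ⟨s, hs, h₁⟩ | ⟨hs, h₁⟩ <;>
  rcases nfMulσ₁_cases l with h₂ | ⟨t, ht, h₂⟩ | ⟨t, ht, h₂⟩ | ⟨ht, h₂⟩ <;>
  rw [h₁, h₂] at h <;> simp at h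
  · exact .inl (List.exists_eq_flatten_replicate_of_cons_cons_eq_append (show y2 ≠ x from nofun) h)
  · subst h
    obtain ⟨n, hn⟩ := List.exists_eq_flatten_replicate_of_cons_cons_eq_append
      (show x ≠ y from nofun) (hs.symm.trans ht)
    exact .inr ⟨n + 1, by simp [hs, hn, List.replicate_succ]⟩
  · simp [hs, ← h] at ht
  · simpa using congrArg List.length h

theorem eq_flatten_replicate_of_commute {l : List Syllable} (hl : IsReduced l)
    (hc : Commute σ₁ (word l)) :
    (∃ n, l = (List.replicate n [y2, x]).flatten) ∨ ∃ n, l = (List.replicate n [x, y]).flatten :=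
  eq_flatten_replicate_of_nfσ₁Mul_eq_nfMulσ₁ <| (eval_inj hl.nfσ₁Mul hl.nfMulσ₁).1 <| by
    rw [← σ₁_mul_word, ← word_mul_σ₁, hc.eq]

theorem δ_sq_mul_Δ : δ ^ 2 * Δ = Δ ^ 2 * σ₁ := by rw [σ₁_eq_inv_Δ_sq_mul]; group

theorem Δ_mul_δ : Δ * δ = Δ ^ 2 * σ₁⁻¹ := by rw [σ₁_eq]; simp only [sq]; group

theorem commute_σ₁_iff {β : BraidGroup 3} :
    Commute σ₁ β ↔ ∃ p q : ℤ, β = (Δ ^ 2) ^ p * σ₁ ^ q := by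
  refine ⟨fun hβ => ?_, ?_⟩
  · obtain ⟨⟨k, l⟩, hl, rfl⟩ := exists_eq_eval β
    have hw : Commute σ₁ (word l) := by
      simpa [eval] using (commute_Δ_sq_zpow k σ₁).symm.inv_right.mul_right hβ
    rcases eq_flatten_replicate_of_commute hl hw with ⟨n, rfl⟩ | ⟨n, rfl⟩
    · refine ⟨k + n, n, ?_⟩
      rw [eval, word_flatten_replicate, value, value, δ_sq_mul_Δ, (commute_Δ_sq σ₁).mul_pow,
        ← mul_assoc, zpow_add, zpow_natCast, zpow_natCast]
    · refine ⟨k + n, -n, ?_⟩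
      rw [eval, word_flatten_replicate, value, value, Δ_mul_δ, (commute_Δ_sq σ₁⁻¹).mul_pow,
        ← mul_assoc, zpow_add, zpow_natCast, inv_pow, zpow_neg, zpow_natCast]
  · rintro ⟨p, q, rfl⟩
    exact (commute_Δ_sq_zpow p σ₁).symm.mul_right (Commute.self_zpow σ₁ q)

theorem isReduced_flatten_replicate (n : ℕ) : IsReduced (List.replicate n [y2, x]).flatten := by
  suffices IsReduced (x :: (List.replicate n [y2, x]).flatten) from List.IsChain.tail this
  induction n with
  | zero => exact List.isChain_singleton x
  | succ n ih => simpa [List.replicate_succ, IsReduced, isX] using ih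

theorem eq_zero_of_zpow_Δ_sq_mul_zpow_σ₁_eq_one {p q : ℤ} (h : (Δ ^ 2) ^ p * σ₁ ^ q = 1) :
    p = 0 ∧ q = 0 := by
  wlog hq : 0 ≤ q generalizing p q
  · have := this (p := -p) (q := -q) (by
      rw [zpow_neg, zpow_neg, ← mul_inv_rev, ← (commute_Δ_sq_zpow p _).eq, h, inv_one]) (by omega)
    omega
  lift q to ℕ using hq
  have : eval (p - q, (List.replicate q [y2, x]).flatten) = eval (0, []) := calc
    _ = (Δ ^ 2) ^ (p - q) * (Δ ^ 2 * σ₁) ^ q := by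
      rw [eval, word_flatten_replicate, value, value, δ_sq_mul_Δ]
    _ = eval (0, []) := by
      rw [(commute_Δ_sq σ₁).mul_pow, ← mul_assoc, ← zpow_natCast (Δ ^ 2), ← zpow_add,
        sub_add_cancel, ← zpow_natCast σ₁, h]
      simp [eval]
  rw [eval_inj (isReduced_flatten_replicate q) isReduced_nil, Prod.mk.injEq] at this
  have hlen := congrArg List.length this.2
  simp at hlen
  omega

theorem mem_centralizer_braidSub_iff {β : BraidGroup 3} :
    β ∈ Subgroup.centralizer (braidSub 3 2 : Set (BraidGroup 3)) ↔ Commute σ₁ β := by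
  have : {β : BraidGroup 3 | ∃ i : Fin (3 - 1), (i : ℕ) < 2 - 1 ∧ β = braidGen i} = {σ₁} := by
    ext β
    simp only [Set.mem_ofPred_eq, Set.mem_singleton_iff]
    constructor
    · rintro ⟨i, hi, rfl⟩
      obtain rfl : i = 0 := Fin.ext (by simp; omega)
      rfl
    · rintro rfl
      exact ⟨0, by simp, rfl⟩
  rw [braidSub, Subgroup.centralizer_closure, this, Subgroup.mem_centralizer_singleton_iff]
  exact eq_comm

theorem centralizer_braidSub_eq_range :
    Subgroup.centralizer (braidSub 3 2 : Set (BraidGroup 3)) =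
      (commute_Δ_sq σ₁).zpowPairHom.range := by
  ext β
  rw [mem_centralizer_braidSub_iff, commute_σ₁_iff, MonoidHom.mem_range]
  constructor
  · rintro ⟨p, q, rfl⟩
    exact ⟨.ofAdd (p, q), rfl⟩
  · rintro ⟨m, rfl⟩
    exact ⟨m.toAdd.1, m.toAdd.2, rfl⟩

theorem injective_zpowPairHom : Function.Injective (commute_Δ_sq σ₁).zpowPairHom := by
  rw [injective_iff_map_eq_one]
  intro m hm
  obtain ⟨hp, hq⟩ := eq_zero_of_zpow_Δ_sq_mul_zpow_σ₁_eq_one hm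
  exact Multiplicative.toAdd.injective (Prod.ext hp hq)

theorem σ₂_mul_σ₁_sq_mul_σ₂ : σ₂ * σ₁ ^ 2 * σ₂ = Δ ^ 2 * σ₁ ^ (-2 : ℤ) :=
  calc σ₂ * σ₁ ^ 2 * σ₂ = σ₁⁻¹ * Δ ^ 2 * σ₁⁻¹ := by simp only [Δ, sq]; group
    _ = Δ ^ 2 * σ₁ ^ (-2 : ℤ) := by rw [(commute_Δ_sq σ₁⁻¹).symm.eq]; group

theorem exists_eq_zpow_Δ_sq_mul_iff {β : BraidGroup 3} :
    (∃ p q : ℤ, β = (Δ ^ 2) ^ p * σ₁ ^ q) ↔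
      ∃ p q : ℤ, β = (σ₂ * σ₁ ^ 2 * σ₂) ^ p * σ₁ ^ q := by
  have key (p q : ℤ) : (σ₂ * σ₁ ^ 2 * σ₂) ^ p * σ₁ ^ q = (Δ ^ 2) ^ p * σ₁ ^ (q - 2 * p) := by
    rw [σ₂_mul_σ₁_sq_mul_σ₂, (commute_Δ_sq _).mul_zpow, mul_assoc, ← zpow_mul, ← zpow_add]
    ring_nf
  constructor
  · rintro ⟨p, q, rfl⟩
    exact ⟨p, q + 2 * p, by rw [key, add_sub_cancel_right]⟩
  · rintro ⟨p, q, rfl⟩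
    exact ⟨p, q - 2 * p, key p q⟩

end Braid3

/-- The centralizer of `B₂` in `B₃` is `{(σ₂σ₁²σ₂)^p σ₁^q : p, q ∈ ℤ}`, and it is
isomorphic to `ℤ × ℤ`. -/
theorem stmt_11 :
    letI σ₁ : BraidGroup 3 := sigma' 3 1
    letI σ₂ : BraidGroup 3 := sigma' 3 2
    (∀ β : BraidGroup 3,
      β ∈ Subgroup.centralizer (braidSub 3 2 : Set (BraidGroup 3)) ↔
        ∃ p q : ℤ, β = (σ₂ * σ₁ ^ 2 * σ₂) ^ p * σ₁ ^ q) ∧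
    Nonempty ((Subgroup.centralizer (braidSub 3 2 : Set (BraidGroup 3))) ≃*
      Multiplicative (ℤ × ℤ)) :=
  ⟨fun _ => Braid3.mem_centralizer_braidSub_iff.trans
      (Braid3.commute_σ₁_iff.trans Braid3.exists_eq_zpow_Δ_sq_mul_iff),
    ⟨(MulEquiv.subgroupCongr Braid3.centralizer_braidSub_eq_range).trans
      (MonoidHom.ofInjective Braid3.injective_zpowPairHom).symm⟩⟩
end

section
/- In B_3, the elements Δ₃² = (σ₁σ₂)³ and σ₁ commute, and the map ℤ × ℤ → B_3 sending (u,v) to Δ₃^{2u} σ₁^v is an injective group homomorphism whose image is the centralizer of B_2 in B_3. -/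
/-!
Put `x = Δ` and `y = σ₁σ₂`. Then `x² = y³ = Δ²`, `x` and `y` generate `B₃`, and `Δ²` commutes
with both, so every braid is `Δ^{2k}` times an alternating word in `x` and `y^{±1}`. The
homomorphism `B₃ → SL(2, ℤ)` with `σ₁ ↦ T` sends `x ↦ S⁻¹`, `y ↦ (TS)⁻¹` and `Δ² ↦ -1`; playing
ping-pong on the regions `v₀v₁ < 0` and `v₀v₁ > 0` of `ℤ²` shows that no nontrivial alternating
word maps to `±1`, so a braid mapping to `±1` is a power of `Δ²`. A braid commuting with `σ₁` maps
to a matrix commuting with `T`, that is to `±Tⁿ`, hence equals `Δ^{2u} σ₁ⁿ`. Injectivity comes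
from the exponent sum (`6` for `Δ²`) and the upper right entry of `±Tᵛ`.
-/

open Subgroup Set

/-- `xPow e` stands for `x ^ e`, and `word e₀ b [c₁, …, cₙ] e₁` for
`x ^ e₀ * y_b * (x * y_{c₁}) * ⋯ * (x * y_{cₙ}) * x ^ e₁`, where `y_true = y`, `y_false = y²`. -/
inductive AltWord
  | xPow (e : Bool)
  | word (e₀ b : Bool) (bs : List Bool) (e₁ : Bool)

namespace AltWord

section Group

variable {G H : Type*} [Group G] [Group H] (x y : G)

def yLetter (b : Bool) : G := if b then y else y ^ 2

def core (b : Bool) (bs : List Bool) : G :=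
  yLetter y b * (bs.map fun c => x * yLetter y c).prod

def eval : AltWord → G
  | xPow e => x ^ e.toNat
  | word e₀ b bs e₁ => x ^ e₀.toNat * core x y b bs * x ^ e₁.toNat

lemma core_cons (b c : Bool) (cs : List Bool) :
    core x y b (c :: cs) = yLetter y b * x * core x y c cs := by
  simp [core, mul_assoc]

lemma map_yLetter (f : G →* H) (b : Bool) : f (yLetter y b) = yLetter (f y) b := by
  cases b <;> simp [yLetter]

lemma map_core (f : G →* H) (b : Bool) (bs : List Bool) :
    f (core x y b bs) = core (f x) (f y) b bs := by
  simp [core, map_list_prod, map_yLetter, Function.comp_def]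

lemma map_eval (f : G →* H) (w : AltWord) : f (w.eval x y) = w.eval (f x) (f y) := by
  cases w <;> simp [eval, map_core]

lemma exists_mul_x_eval (w : AltWord) :
    ∃ (k : ℤ) (w' : AltWord), x * w.eval x y = (x ^ 2) ^ k * w'.eval x y := by
  rcases w with (_ | _) | ⟨(_ | _), b, bs, e₁⟩
  · exact ⟨0, xPow true, by simp [eval]⟩
  · exact ⟨1, xPow false, by simp [eval, sq]⟩
  · exact ⟨0, word true b bs e₁, by simp [eval, mul_assoc]⟩
  · exact ⟨1, word false b bs e₁, by simp [eval, sq, mul_assoc]⟩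

variable {x y}

lemma commute_yLetter {a : G} (ha : Commute a y) (b : Bool) : Commute a (yLetter y b) := by
  cases b
  · exact ha.pow_right 2
  · exact ha

lemma yLetter_mul_yLetter_not (b : Bool) : yLetter y b * yLetter y (!b) = y ^ 3 := by
  cases b <;> simp [yLetter, pow_succ, mul_assoc]

lemma exists_mul_y_eval (h : x ^ 2 = y ^ 3) (w : AltWord) :
    ∃ (k : ℤ) (w' : AltWord), y * w.eval x y = (x ^ 2) ^ k * w'.eval x y :=
  match w with
  | xPow false => ⟨0, word false true [] false, by simp [eval, core, yLetter]⟩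
  | xPow true => ⟨0, word false true [] true, by simp [eval, core, yLetter]⟩
  | word true b bs e₁ => ⟨0, word false true (b :: bs) e₁, by
      simp [eval, core_cons, yLetter, mul_assoc]⟩
  | word false true bs e₁ => ⟨0, word false false bs e₁, by
      simp [eval, core, yLetter, pow_two, mul_assoc]⟩
  | word false false [] e₁ => ⟨1, xPow e₁, by
      simp [eval, core, yLetter, h, pow_succ, mul_assoc]⟩
  | word false false (c :: cs) e₁ => ⟨1, word true c cs e₁, by
      simp [eval, core_cons, yLetter, h]; group⟩

lemma exists_mul_zpow_mul_eval {a : G} (ha : Commute a (x ^ 2))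
    (hmul : ∀ w : AltWord, ∃ (k : ℤ) (w' : AltWord), a * w.eval x y = (x ^ 2) ^ k * w'.eval x y)
    (k : ℤ) (w : AltWord) :
    ∃ (j : ℤ) (w' : AltWord), a * ((x ^ 2) ^ k * w.eval x y) = (x ^ 2) ^ j * w'.eval x y := by
  obtain ⟨j, w', hw'⟩ := hmul w
  refine ⟨k + j, w', ?_⟩
  rw [← mul_assoc, (ha.zpow_right k).eq, mul_assoc, hw', ← mul_assoc, zpow_add]

theorem exists_eq_zpow_mul_eval (h : x ^ 2 = y ^ 3) {g : G} (hg : g ∈ closure {x, y}) :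
    ∃ (k : ℤ) (w : AltWord), g = (x ^ 2) ^ k * w.eval x y := by
  have hx : Commute x (x ^ 2) := (Commute.refl x).pow_right 2
  have hy : Commute y (x ^ 2) := h ▸ (Commute.refl y).pow_right 3
  have step_x := exists_mul_zpow_mul_eval hx (exists_mul_x_eval x y)
  have step_y := exists_mul_zpow_mul_eval hy (exists_mul_y_eval h)
  induction hg using Subgroup.closure_induction_left with
  | one => exact ⟨0, xPow false, by simp [eval]⟩
  | mul_left a ha g _ ih =>
    obtain ⟨k, w, rfl⟩ := ih
    rcases ha with rfl | rfl
    · exact step_x k w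
    · exact step_y k w
  | inv_mul_cancel a ha g _ ih =>
    obtain ⟨k, w, rfl⟩ := ih
    rcases ha with rfl | rfl
    · obtain ⟨j, w', hw'⟩ := step_x k w
      exact ⟨-1 + j, w', by rw [zpow_add, zpow_neg_one, mul_assoc, ← hw']; group⟩
    · obtain ⟨j, w', hw'⟩ := step_y k w
      obtain ⟨i, w'', hw''⟩ := step_y j w'
      exact ⟨-1 + i, w'', by rw [zpow_add, zpow_neg_one, mul_assoc, ← hw'', ← hw', h]; group⟩

lemma commute_of_mem_zpowers_sq {a : G} (ha : a ∈ zpowers (x ^ 2)) : Commute a x := by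
  obtain ⟨k, rfl⟩ := ha
  exact ((Commute.refl x).pow_left 2).zpow_left k

-- `y_b (core · x) y_{!b}` is again a `core`, up to a power of `x²`.
lemma core_append_mem_of_core_mul_mem (h : x ^ 2 = y ^ 3) {b : Bool} {bs : List Bool}
    (hK : core x y b bs * x ∈ zpowers (x ^ 2)) :
    core x y (!b) (bs ++ [!b]) ∈ zpowers (x ^ 2) := by
  set K := zpowers (x ^ 2)
  have hy : Commute (core x y b bs * x) y := by
    obtain ⟨k, hk⟩ := hK
    exact hk ▸ (h ▸ (Commute.refl y).pow_left 3).zpow_left k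
  have conj_mem : yLetter y b * (core x y b bs * x) * yLetter y (!b) ∈ K := by
    rw [← (commute_yLetter hy b).eq, mul_assoc, yLetter_mul_yLetter_not, ← h]
    exact K.mul_mem hK (mem_zpowers _)
  cases b
  · have : y ^ 2 * (core x y false bs * x) * y = x ^ 2 * core x y true (bs ++ [true]) := by
      simp [core, yLetter, h]; group
    simpa [yLetter, this] using K.mul_mem (K.inv_mem (mem_zpowers _)) conj_mem
  · have : y * (core x y true bs * x) * y ^ 2 = core x y false (bs ++ [false]) := by
      simp [core, yLetter, pow_two, mul_assoc]
    simpa [yLetter, this] using conj_mem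

end Group

section PingPong

variable {G α : Type*} [Group G] [MulAction G α] {x y : G} {X Y : Set α}

lemma core_mapsTo (hx : MapsTo (x • ·) Y X) (hy : ∀ b, MapsTo (yLetter y b • ·) X Y)
    (b : Bool) (bs : List Bool) : MapsTo (core x y b bs • ·) X Y := by
  induction bs generalizing b with
  | nil => simpa [core] using hy b
  | cons c cs ih =>
    intro v hv
    simp only [core_cons, mul_smul]
    exact hy b (hx (ih c hv))

lemma notMem_of_mapsTo {K : Subgroup G} {S T : Set α} {g : G} (hST : Disjoint S T)
    (hS : S.Nonempty) (hK : ∀ k ∈ K, MapsTo (k • ·) S S) (hg : MapsTo (g • ·) S T) : g ∉ K := by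
  intro hgK
  obtain ⟨v, hv⟩ := hS
  exact hST.ne_of_mem (hK g hgK hv) (hg hv) rfl

theorem eval_mem_zpowers_iff (h : x ^ 2 = y ^ 3) (hXY : Disjoint X Y) (hX₀ : X.Nonempty)
    (hX : ∀ k ∈ zpowers (x ^ 2), MapsTo (k • ·) X X)
    (hY : ∀ k ∈ zpowers (x ^ 2), MapsTo (k • ·) Y Y)
    (hx : MapsTo (x • ·) Y X) (hy : ∀ b, MapsTo (yLetter y b • ·) X Y) (w : AltWord) :
    w.eval x y ∈ zpowers (x ^ 2) ↔ w = xPow false := by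
  set K := zpowers (x ^ 2)
  have core_notMem b bs : core x y b bs ∉ K :=
    notMem_of_mapsTo hXY hX₀ hX (core_mapsTo hx hy b bs)
  have core_mul_notMem b bs : core x y b bs * x ∉ K :=
    fun hK => core_notMem _ _ (core_append_mem_of_core_mul_mem h hK)
  refine ⟨fun hw => ?_, fun hw => hw ▸ by simp [eval]⟩
  rcases w with (_ | _) | ⟨(_ | _), b, bs, (_ | _)⟩
  · rfl
  · have := notMem_of_mapsTo hXY.symm ⟨_, hy true hX₀.some_mem⟩ hY hx
    simp_all [eval]
  · exact absurd (by simpa [eval] using hw) (core_notMem b bs)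
  · exact absurd (by simpa [eval] using hw) (core_mul_notMem b bs)
  · have hw : x * core x y b bs ∈ K := by simpa [eval] using hw
    refine absurd ?_ (core_mul_notMem b bs)
    have : core x y b bs * x = x⁻¹ * (x * core x y b bs) * x := by group
    rwa [this, mul_assoc x⁻¹, (commute_of_mem_zpowers_sq hw).eq, inv_mul_cancel_left]
  · have hw : x * core x y b bs * x ∈ K := by simpa [eval] using hw
    refine absurd ?_ (core_notMem b bs)
    have : core x y b bs = x⁻¹ * (x * core x y b bs * x) * x⁻¹ := by group
    rw [this, ← ((commute_of_mem_zpowers_sq hw).inv_right).eq, mul_assoc, ← mul_inv_rev, ← sq]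
    exact K.mul_mem hw (K.inv_mem (mem_zpowers _))

end PingPong

end AltWord

open Matrix MatrixGroups ModularGroup

namespace Matrix.SpecialLinearGroup

lemma eq_one_or_eq_neg_one_of_mem_zpowers {M : SL(2, ℤ)}
    (hM : M ∈ zpowers (-1)) : M = 1 ∨ M = -1 := by
  obtain ⟨k, rfl⟩ := hM
  dsimp only
  rw [neg_one_zpow_eq_ite]
  split_ifs <;> simp

lemma smul_fin_two_apply (M : SL(2, ℤ)) (v : Fin 2 → ℤ) (i : Fin 2) :
    (M • v) i = M i 0 * v 0 + M i 1 * v 1 := by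
  change ((M : Matrix (Fin 2) (Fin 2) ℤ) *ᵥ v) i = _
  simp [mulVec, dotProduct, Fin.sum_univ_two]

end Matrix.SpecialLinearGroup

namespace ModularGroup

lemma S_sq : S ^ 2 = -1 := by
  ext i j; fin_cases i <;> fin_cases j <;> simp [sq, coe_S]

lemma T_mul_S_pow_three : (T * S) ^ 3 = -1 := by
  ext i j; fin_cases i <;> fin_cases j <;> simp [pow_succ, coe_S, coe_T]

lemma exists_eq_T_zpow_or_eq_neg_T_zpow_of_commute {M : SL(2, ℤ)} (h : Commute M T) :
    ∃ n : ℤ, M = T ^ n ∨ M = -T ^ n := by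
  have hM := congr_arg (fun A : SL(2, ℤ) => (A : Matrix (Fin 2) (Fin 2) ℤ)) h.eq
  have h00 := congr_fun₂ hM 0 0
  simp [coe_T, mul_apply, Fin.sum_univ_two] at h00
  have hdet := M.det_coe
  rw [det_fin_two, h00, mul_zero, sub_zero] at hdet
  rcases Int.eq_one_or_neg_one_of_mul_eq_one' hdet with ⟨ha, hd⟩ | ⟨ha, hd⟩
  · refine ⟨M 0 1, Or.inl ?_⟩
    ext i j; fin_cases i <;> fin_cases j <;> simp [ha, hd, h00, coe_T_zpow]
  · refine ⟨-M 0 1, Or.inr ?_⟩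
    ext i j; fin_cases i <;> fin_cases j <;> simp [ha, hd, h00, coe_T_zpow]

lemma S_inv_sq : S⁻¹ ^ 2 = -1 := by
  rw [inv_pow, S_sq, inv_neg_one]

theorem eval_S_inv_mem_zpowers_neg_one_iff (w : AltWord) :
    w.eval S⁻¹ (T * S)⁻¹ ∈ zpowers (-1) ↔ w = AltWord.xPow false := by
  have hxy : S⁻¹ ^ 2 = (T * S)⁻¹ ^ 3 := by rw [S_inv_sq, inv_pow, T_mul_S_pow_three, inv_neg_one]
  have hsign : ∀ k ∈ zpowers (S⁻¹ ^ 2), ∀ v : Fin 2 → ℤ, (k • v) 0 * (k • v) 1 = v 0 * v 1 := by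
    intro k hk v
    rw [S_inv_sq] at hk
    rcases SpecialLinearGroup.eq_one_or_eq_neg_one_of_mem_zpowers hk with rfl | rfl <;>
      simp [SpecialLinearGroup.smul_fin_two_apply]
  rw [← S_inv_sq]
  refine AltWord.eval_mem_zpowers_iff hxy (X := {v : Fin 2 → ℤ | v 0 * v 1 < 0})
    (Y := {v | 0 < v 0 * v 1}) (Set.disjoint_left.mpr fun _ h₁ h₂ => lt_asymm (α := ℤ) h₁ h₂)
    ⟨![1, -1], by simp⟩ (fun k hk v hv => ?_) (fun k hk v hv => ?_) (fun v hv => ?_)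
    (fun b v hv => ?_) w
  · simpa [hsign k hk v] using hv
  · simpa [hsign k hk v] using hv
  · simp [SpecialLinearGroup.smul_fin_two_apply] at hv ⊢
    nlinarith
  · cases b <;> simp [AltWord.yLetter, sq, mul_smul, SpecialLinearGroup.smul_fin_two_apply] at hv ⊢
    · nlinarith [sq_nonneg (v 0)]
    · nlinarith [sq_nonneg (v 1)]

lemma braid_rel_T_TST_inv :
    T * (T * S * T)⁻¹ * T = (T * S * T)⁻¹ * T * (T * S * T)⁻¹ := by
  have h : (T * S) ^ 3 = S ^ 2 := by rw [T_mul_S_pow_three, S_sq]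
  calc T * (T * S * T)⁻¹ * T = S * (S ^ 2)⁻¹ := by group
    _ = S * ((T * S) ^ 3)⁻¹ := by rw [h]
    _ = (T * S * T)⁻¹ * T * (T * S * T)⁻¹ := by rw [pow_succ, sq]; group

end ModularGroup

namespace Commute

variable {G : Type*} [Group G] {a b : G}

def zpowPairHom_s13 (h : Commute a b) : Multiplicative (ℤ × ℤ) →* G :=
  ((zpowersHom G a).noncommCoprod (zpowersHom G b) fun _ _ => h.zpow_zpow _ _).comp
    (MulEquiv.prodMultiplicative ℤ ℤ).toMonoidHom

lemma zpowPairHom_ofAdd (h : Commute a b) (u v : ℤ) :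
    h.zpowPairHom_s13 (Multiplicative.ofAdd (u, v)) = a ^ u * b ^ v :=
  rfl

end Commute

section BraidGroupThree

local notation "σ₁" => sigma' 3 1
local notation "σ₂" => sigma' 3 2
local notation "Δ" => Delta 3 3

lemma sigma'_three_one : σ₁ = PresentedGroup.of (0 : Fin 2) := by
  simp [sigma', braidGen]

lemma sigma'_three_two : σ₂ = PresentedGroup.of (1 : Fin 2) := by
  simp [sigma', braidGen]

lemma braid_rel_three : σ₁ * σ₂ * σ₁ = σ₂ * σ₁ * σ₂ := by
  rw [sigma'_three_one, sigma'_three_two]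
  exact PresentedGroup.mk_eq_mk_of_mul_inv_mem (Or.inr ⟨0, 1, rfl, rfl⟩)

lemma Delta_three : Δ = σ₂ * σ₁ * σ₂ := by
  simp [Delta, descSeg, List.range_succ, mul_assoc]

lemma Delta_three' : Δ = σ₁ * σ₂ * σ₁ := by
  rw [Delta_three, braid_rel_three]

lemma Delta_mul_sigma_one : Δ * σ₁ = σ₂ * Δ :=
  calc Δ * σ₁ = σ₂ * (σ₁ * σ₂ * σ₁) := by rw [Delta_three]; group
    _ = σ₂ * Δ := by rw [Delta_three']

lemma Delta_mul_sigma_two : Δ * σ₂ = σ₁ * Δ :=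
  calc Δ * σ₂ = σ₁ * (σ₂ * σ₁ * σ₂) := by rw [Delta_three']; group
    _ = σ₁ * Δ := by rw [Delta_three]

lemma Delta_three_sq : Δ ^ 2 = (σ₁ * σ₂) ^ 3 := by
  rw [sq]
  nth_rw 1 [Delta_three']
  rw [Delta_three]
  simp only [pow_succ, pow_zero, one_mul, mul_assoc]

lemma commute_Delta_three_sq_sigma_one : Commute (Δ ^ 2) σ₁ := by
  rw [Commute, SemiconjBy, sq, mul_assoc, Delta_mul_sigma_one, ← mul_assoc, Delta_mul_sigma_two,
    mul_assoc]

lemma closure_Delta_three_eq_top : closure {Δ, σ₁ * σ₂} = ⊤ := by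
  have hΔ : Δ ∈ closure {Δ, σ₁ * σ₂} := subset_closure (by simp)
  have hy : σ₁ * σ₂ ∈ closure {Δ, σ₁ * σ₂} := subset_closure (by simp)
  have h₁ : σ₁ ∈ closure {Δ, σ₁ * σ₂} := by
    have h := mul_mem (inv_mem hy) hΔ
    rwa [show (σ₁ * σ₂)⁻¹ * Δ = σ₁ by rw [Delta_three']; group] at h
  refine eq_top_iff.mpr fun g _ => PresentedGroup.generated_by _ _ (fun i => ?_) g
  fin_cases i
  · simpa [sigma'_three_one] using h₁
  · simpa [sigma'_three_two] using mul_mem (inv_mem h₁) hy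

lemma lift_braidRels_three_eq_one : ∀ r ∈ braidRels (3 - 1),
    FreeGroup.lift (fun i : Fin (3 - 1) => ![T, (T * S * T)⁻¹] i) r = 1 := by
  rintro r (⟨i, j, hij, rfl⟩ | ⟨i, j, hij, rfl⟩)
  · have := j.isLt
    omega
  · fin_cases i <;> fin_cases j <;> simp at hij
    simp only [map_mul, map_inv, FreeGroup.lift_apply_of]
    rw [mul_inv_eq_one]
    exact braid_rel_T_TST_inv

/-- The reduced Burau representation at `t = -1`: `σ₁ ↦ T = !![1, 1; 0, 1]`,
`σ₂ ↦ (TST)⁻¹ = !![1, 0; -1, 1]`. -/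
def braidThreeToSL2Z : BraidGroup 3 →* SL(2, ℤ) :=
  PresentedGroup.toGroup lift_braidRels_three_eq_one

lemma braidThreeToSL2Z_sigma_one : braidThreeToSL2Z σ₁ = T := by
  rw [sigma'_three_one, braidThreeToSL2Z, PresentedGroup.toGroup.of]
  rfl

lemma braidThreeToSL2Z_sigma_two : braidThreeToSL2Z σ₂ = (T * S * T)⁻¹ := by
  rw [sigma'_three_two, braidThreeToSL2Z, PresentedGroup.toGroup.of]
  rfl

lemma braidThreeToSL2Z_sigma_one_mul_sigma_two : braidThreeToSL2Z (σ₁ * σ₂) = (T * S)⁻¹ := by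
  rw [map_mul, braidThreeToSL2Z_sigma_one, braidThreeToSL2Z_sigma_two]
  group

lemma braidThreeToSL2Z_Delta : braidThreeToSL2Z Δ = S⁻¹ := by
  rw [Delta_three', map_mul, braidThreeToSL2Z_sigma_one_mul_sigma_two, braidThreeToSL2Z_sigma_one]
  group

theorem mem_zpowers_of_braidThreeToSL2Z_mem {g : BraidGroup 3}
    (hg : braidThreeToSL2Z g ∈ zpowers (-1)) : g ∈ zpowers (Δ ^ 2) := by
  obtain ⟨k, w, rfl⟩ := AltWord.exists_eq_zpow_mul_eval Delta_three_sq
    (closure_Delta_three_eq_top ▸ mem_top g)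
  rw [map_mul, map_zpow, map_pow, braidThreeToSL2Z_Delta, S_inv_sq,
    Subgroup.mul_mem_cancel_left _ (zpow_mem (mem_zpowers _) _), AltWord.map_eval,
    braidThreeToSL2Z_Delta, braidThreeToSL2Z_sigma_one_mul_sigma_two,
    eval_S_inv_mem_zpowers_neg_one_iff] at hg
  subst hg
  simp [AltWord.eval]

theorem exists_eq_zpow_mul_zpow_of_commute_sigma_one {g : BraidGroup 3} (hg : Commute g σ₁) :
    ∃ u v : ℤ, g = (Δ ^ 2) ^ u * σ₁ ^ v := by
  have hT : Commute (braidThreeToSL2Z g) T := braidThreeToSL2Z_sigma_one ▸ hg.map _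
  obtain ⟨n, hn⟩ := exists_eq_T_zpow_or_eq_neg_T_zpow_of_commute hT
  have hmem : braidThreeToSL2Z (g * σ₁ ^ (-n)) ∈ zpowers (-1) := by
    rw [map_mul, map_zpow, braidThreeToSL2Z_sigma_one]
    rcases hn with hn | hn <;> simp [hn, _root_.zpow_neg]
  obtain ⟨u, hu⟩ := mem_zpowers_of_braidThreeToSL2Z_mem hmem
  refine ⟨u, n, ?_⟩
  simp only at hu
  rw [hu]
  group

def braidExponentSum (n : ℕ) : BraidGroup n →* Multiplicative ℤ :=
  PresentedGroup.toGroup (f := fun _ => Multiplicative.ofAdd 1) <| by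
    rintro r (⟨i, j, -, rfl⟩ | ⟨i, j, -, rfl⟩) <;>
      simp only [map_mul, map_inv, FreeGroup.lift_apply_of] <;> group

lemma eq_zero_of_Delta_three_sq_zpow_mul_zpow_eq_one {u v : ℤ} (h : (Δ ^ 2) ^ u * σ₁ ^ v = 1) : u = 0 ∧ v = 0 := by
  have hv : v = 0 := by
    have hT : T ^ v ∈ zpowers (-1) := by
      have := congr_arg braidThreeToSL2Z h
      rw [map_mul, map_zpow, map_pow, braidThreeToSL2Z_Delta, S_inv_sq, map_zpow,
        braidThreeToSL2Z_sigma_one, map_one, mul_eq_one_iff_inv_eq] at this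
      exact this ▸ inv_mem (zpow_mem (mem_zpowers _) u)
    rcases SpecialLinearGroup.eq_one_or_eq_neg_one_of_mem_zpowers hT with h | h <;>
      simpa [coe_T_zpow] using congr_arg (fun M : SL(2, ℤ) => M 0 1) h
  subst hv
  have := congr_arg (fun g => Multiplicative.toAdd (braidExponentSum 3 g)) h
  simp [Delta_three_sq, braidExponentSum, sigma'_three_one, sigma'_three_two] at this
  exact ⟨this, rfl⟩

lemma braidSub_three_two : braidSub 3 2 = closure {σ₁} := by
  rw [braidSub, sigma'_three_one]
  congr 1
  ext β
  constructor
  · rintro ⟨i, hi, rfl⟩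
    obtain rfl : i = 0 := Fin.ext (by simpa using hi)
    rfl
  · rintro rfl
    exact ⟨0, by simp, rfl⟩

end BraidGroupThree

/-- In `B₃`, `Δ₃² = (σ₁σ₂)³` commutes with `σ₁`, and `(u,v) ↦ Δ₃^{2u} σ₁^v` is an injective
homomorphism `ℤ × ℤ → B₃` whose image is the centralizer of `B₂` in `B₃`. -/
theorem stmt_13 :
    letI σ₁ : BraidGroup 3 := sigma' 3 1
    letI σ₂ : BraidGroup 3 := sigma' 3 2
    Delta 3 3 ^ 2 = (σ₁ * σ₂) ^ 3 ∧
    Commute (Delta 3 3 ^ 2) σ₁ ∧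
    ∃ f : Multiplicative (ℤ × ℤ) →* BraidGroup 3,
      Function.Injective f ∧
      (∀ u v : ℤ, f (Multiplicative.ofAdd (u, v)) = (Delta 3 3 ^ 2) ^ u * σ₁ ^ v) ∧
      f.range = Subgroup.centralizer (braidSub 3 2 : Set (BraidGroup 3)) := by
  have hcomm := commute_Delta_three_sq_sigma_one
  refine ⟨Delta_three_sq, hcomm, hcomm.zpowPairHom_s13, ?_, hcomm.zpowPairHom_ofAdd, ?_⟩
  · refine (injective_iff_map_eq_one _).mpr fun p hp => ?_
    obtain ⟨hu, hv⟩ := eq_zero_of_Delta_three_sq_zpow_mul_zpow_eq_one hp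
    exact Prod.ext hu hv
  · ext g
    rw [braidSub_three_two, centralizer_closure, mem_centralizer_singleton_iff]
    constructor
    · rintro ⟨p, rfl⟩
      exact ((hcomm.zpow_left _).mul_left ((Commute.refl _).zpow_left _)).eq
    · intro hg
      obtain ⟨u, v, rfl⟩ := exists_eq_zpow_mul_zpow_of_commute_sigma_one hg
      exact ⟨Multiplicative.ofAdd (u, v), rfl⟩
end

section
/- For n ≥ 3, the commutator subgroup [B_n, B_n], with the restriction of the Dehornoy ordering, has no least positive element; hence the Dehornoy order restricted to [B_n, B_n] is dense. -/
/-!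
A `σ₁`-positive braid has positive exponent sum, so a Dehornoy-positive braid `β` in
`[B_n, B_n]` is `σ_{k+1}`-positive for some `k ≥ 1`. Splitting a witnessing word at its first
`σ_{k+1}` gives `β = g σ_{k+1} y`, where `g` is a word in `σ_1, …, σ_k` and `y` is
`σ_{k+1}`-nonnegative. With `s = σ_{k+1}`, `t = σ_k` and `x = g t⁻¹`, the braid
`γ = x s x⁻¹ t⁻¹ = (g t⁻¹) s (t g⁻¹ t⁻¹)` is `σ_{k+1}`-positive and lies in `[B_n, B_n]`,
because `s` and `t` are conjugate. The braid relation `t⁻¹ s⁻¹ t s = s t⁻¹` gives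
`γ⁻¹ β = (t g) s (t⁻¹ y)`, which is `σ_{k+1}`-positive too. So every positive element of
`[B_n, B_n]` lies above a smaller positive one. This rules out a least positive element, and
applied to `f⁻¹ g` it gives density.
-/

section FreeGroupCount

variable {α : Type*} [DecidableEq α]

def FreeGroup.genCount (a : α) : FreeGroup α →* Multiplicative ℤ :=
  FreeGroup.lift fun b => if b = a then Multiplicative.ofAdd 1 else 1

theorem FreeGroup.toAdd_genCount_mk (a : α) (L : List (α × Bool)) :
    (FreeGroup.genCount a (FreeGroup.mk L)).toAdd =
      (L.count (a, true) : ℤ) - L.count (a, false) := by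
  rw [FreeGroup.genCount, FreeGroup.lift_mk]
  induction L with
  | nil => simp
  | cons x L ih =>
    rw [List.map_cons, List.prod_cons, toAdd_mul, ih, List.count_cons, List.count_cons]
    obtain ⟨b, _ | _⟩ := x <;> by_cases hb : b = a <;> simp [hb] <;> omega

theorem FreeGroup.mem_toWord_mk {a : α} {L : List (α × Bool)} (ha : (a, true) ∈ L)
    (hna : (a, false) ∉ L) : (a, true) ∈ (FreeGroup.mk L).toWord := by
  have hcount := FreeGroup.toAdd_genCount_mk a (FreeGroup.mk L).toWord
  rw [FreeGroup.mk_toWord, FreeGroup.toAdd_genCount_mk, List.count_eq_zero.2 hna] at hcount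
  have hpos := List.count_pos_iff.2 ha
  rw [← List.count_pos_iff]
  omega

end FreeGroupCount

open scoped commutatorElement in
theorem conj_mul_inv_mem_commutator_of_braid {G : Type*} [Group G] {s t : G}
    (h : t * s * t = s * t * s) (x : G) : x * s * x⁻¹ * t⁻¹ ∈ commutator G := by
  have hst : s * t⁻¹ = ⁅t * s, t⁆ := by rw [commutatorElement_def, h]; group
  have hx : x * s * x⁻¹ * t⁻¹ = ⁅x, s⁆ * (s * t⁻¹) := by rw [commutatorElement_def]; group
  rw [hx, hst]
  exact mul_mem (Subgroup.commutator_mem_commutator (Subgroup.mem_top x) (Subgroup.mem_top s))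
    (Subgroup.commutator_mem_commutator (Subgroup.mem_top _) (Subgroup.mem_top t))

theorem PresentedGroup.mk_mk {α : Type*} {rels : Set (FreeGroup α)} (L : List (α × Bool)) :
    PresentedGroup.mk rels (FreeGroup.mk L) =
      (L.map fun x => cond x.2 (PresentedGroup.of x.1) (PresentedGroup.of x.1)⁻¹).prod := by
  have hlift : PresentedGroup.mk rels = FreeGroup.lift PresentedGroup.of :=
    FreeGroup.ext_hom _ _ fun _ => rfl
  rw [hlift, FreeGroup.lift_mk]

namespace BraidGroup

variable {n : ℕ}

theorem braidGen_braid {i j : Fin (n - 1)} (hij : (i : ℕ) + 1 = j) :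
    braidGen (n := n) i * braidGen j * braidGen i = braidGen j * braidGen i * braidGen j := by
  have hrel := PresentedGroup.one_of_mem (rels := braidRels (n - 1)) (Or.inr ⟨i, j, hij, rfl⟩)
  simp only [map_mul, map_inv] at hrel
  exact mul_inv_eq_one.1 hrel

def IsINonnegWord (i : Fin (n - 1)) (L : List (Fin (n - 1) × Bool)) : Prop :=
  ∀ l ∈ L, l.1 ≤ i ∧ (l.1 = i → l.2 = true)

def iNonnegSubmonoid (n : ℕ) (i : Fin (n - 1)) : Submonoid (BraidGroup n) :=
  Submonoid.closure (insert (braidGen i) (braidSub n (i + 1)))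

theorem braidGen_mem_braidSub {i j : Fin (n - 1)} (hj : j < i) :
    braidGen j ∈ braidSub n (i + 1) :=
  Subgroup.subset_closure ⟨j, by simpa using hj, rfl⟩

theorem mem_iNonnegSubmonoid_of_mem_braidSub {i : Fin (n - 1)} {g : BraidGroup n}
    (hg : g ∈ braidSub n (i + 1)) : g ∈ iNonnegSubmonoid n i :=
  Submonoid.subset_closure (Set.mem_insert_of_mem _ hg)

theorem braidGen_mem_iNonnegSubmonoid (i : Fin (n - 1)) : braidGen i ∈ iNonnegSubmonoid n i :=
  Submonoid.subset_closure (Set.mem_insert _ _)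

theorem cond_mem_braidSub {i j : Fin (n - 1)} (hj : j < i) (b : Bool) :
    cond b (braidGen j) (braidGen j)⁻¹ ∈ braidSub n (i + 1) := by
  cases b
  · exact inv_mem (braidGen_mem_braidSub hj)
  · exact braidGen_mem_braidSub hj

theorem mk_mem_braidSub {i : Fin (n - 1)} {L : List (Fin (n - 1) × Bool)}
    (hL : ∀ l ∈ L, l.1 < i) : PresentedGroup.mk _ (FreeGroup.mk L) ∈ braidSub n (i + 1) := by
  rw [PresentedGroup.mk_mk]
  exact list_prod_mem (List.forall_mem_map.2 fun l hl => cond_mem_braidSub (hL l hl) l.2)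

theorem mk_mem_iNonnegSubmonoid {i : Fin (n - 1)} {L : List (Fin (n - 1) × Bool)}
    (hL : IsINonnegWord i L) : PresentedGroup.mk _ (FreeGroup.mk L) ∈ iNonnegSubmonoid n i := by
  rw [PresentedGroup.mk_mk]
  refine list_prod_mem (List.forall_mem_map.2 fun ⟨j, b⟩ hl => ?_)
  obtain ⟨hji, hjb⟩ := hL _ hl
  rcases hji.lt_or_eq with hji | rfl
  · exact mem_iNonnegSubmonoid_of_mem_braidSub (cond_mem_braidSub hji b)
  · rw [hjb rfl]
    exact braidGen_mem_iNonnegSubmonoid j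

theorem exists_word_of_mem_braidSub {i : Fin (n - 1)} {g : BraidGroup n}
    (hg : g ∈ braidSub n (i + 1)) :
    ∃ L : List (Fin (n - 1) × Bool),
      (∀ l ∈ L, l.1 < i) ∧ PresentedGroup.mk _ (FreeGroup.mk L) = g := by
  induction hg using Subgroup.closure_induction with
  | mem _ hx =>
    obtain ⟨j, hj, rfl⟩ := hx
    refine ⟨[(j, true)], ?_, rfl⟩
    simp only [List.mem_singleton, forall_eq, Fin.lt_def]
    omega
  | one => exact ⟨[], by simp, rfl⟩
  | mul _ _ _ _ hx hy =>
    obtain ⟨L₁, hL₁, rfl⟩ := hx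
    obtain ⟨L₂, hL₂, rfl⟩ := hy
    refine ⟨L₁ ++ L₂, fun l hl => ?_, by rw [← FreeGroup.mul_mk, map_mul]⟩
    rcases List.mem_append.1 hl with hl | hl
    exacts [hL₁ l hl, hL₂ l hl]
  | inv _ _ hx =>
    obtain ⟨L, hL, rfl⟩ := hx
    refine ⟨FreeGroup.invRev L, fun l hl => ?_, by rw [← FreeGroup.inv_mk, map_inv]⟩
    simp only [FreeGroup.invRev, List.mem_reverse, List.mem_map] at hl
    obtain ⟨l', hl', rfl⟩ := hl
    exact hL l' hl'

theorem exists_word_of_mem_iNonnegSubmonoid {i : Fin (n - 1)} {x : BraidGroup n}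
    (hx : x ∈ iNonnegSubmonoid n i) :
    ∃ L, IsINonnegWord i L ∧ PresentedGroup.mk _ (FreeGroup.mk L) = x := by
  induction hx using Submonoid.closure_induction with
  | mem _ hx =>
    rcases hx with rfl | hg
    · exact ⟨[(i, true)], by simp [IsINonnegWord], rfl⟩
    · obtain ⟨L, hL, rfl⟩ := exists_word_of_mem_braidSub hg
      exact ⟨L, fun l hl => ⟨(hL l hl).le, fun h => absurd h (hL l hl).ne⟩, rfl⟩
  | one => exact ⟨[], by simp [IsINonnegWord], rfl⟩
  | mul _ _ _ _ hx hy =>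
    obtain ⟨L₁, hL₁, rfl⟩ := hx
    obtain ⟨L₂, hL₂, rfl⟩ := hy
    refine ⟨L₁ ++ L₂, fun l hl => ?_, by rw [← FreeGroup.mul_mk, map_mul]⟩
    rcases List.mem_append.1 hl with hl | hl
    exacts [hL₁ l hl, hL₂ l hl]

theorem isIPositive_mk {i : Fin (n - 1)} {L : List (Fin (n - 1) × Bool)}
    (hL : IsINonnegWord i L) (hi : (i, true) ∈ L) :
    IsIPositive (PresentedGroup.mk _ (FreeGroup.mk L)) i := by
  have hsub : (FreeGroup.mk L).toWord ⊆ L := by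
    rw [FreeGroup.toWord_mk]
    exact (FreeGroup.Red.sublist FreeGroup.reduce.red).subset
  have hneg : (i, false) ∉ L := fun h => Bool.false_ne_true ((hL _ h).2 rfl)
  exact ⟨_, rfl, fun l hl => hL l (hsub hl), _, FreeGroup.mem_toWord_mk hi hneg, rfl⟩

theorem isIPositive_mul_braidGen_mul {i : Fin (n - 1)} {x y : BraidGroup n}
    (hx : x ∈ iNonnegSubmonoid n i) (hy : y ∈ iNonnegSubmonoid n i) :
    IsIPositive (x * braidGen i * y) i := by
  obtain ⟨L₁, hL₁, rfl⟩ := exists_word_of_mem_iNonnegSubmonoid hx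
  obtain ⟨L₂, hL₂, rfl⟩ := exists_word_of_mem_iNonnegSubmonoid hy
  have hword : IsINonnegWord i (L₁ ++ (i, true) :: L₂) := by
    intro l hl
    simp only [List.mem_append, List.mem_cons] at hl
    rcases hl with hl | rfl | hl
    exacts [hL₁ l hl, ⟨le_rfl, fun _ => rfl⟩, hL₂ l hl]
  convert isIPositive_mk hword (by simp) using 1
  rw [← List.singleton_append, ← FreeGroup.mul_mk, ← FreeGroup.mul_mk, map_mul, map_mul,
    mul_assoc]
  rfl

theorem _root_.IsIPositive.exists_eq_mul_braidGen_mul {i : Fin (n - 1)} {β : BraidGroup n}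
    (hβ : IsIPositive β i) :
    ∃ g ∈ braidSub n (i + 1), ∃ y ∈ iNonnegSubmonoid n i, β = g * braidGen i * y := by
  obtain ⟨w, rfl, hw, l, hlw, hli⟩ := hβ
  obtain ⟨x, hx⟩ := Option.isSome_iff_exists.1
    (List.find?_isSome.2 ⟨l, hlw, decide_eq_true hli⟩ : (w.toWord.find? fun l => l.1 = i).isSome)
  obtain ⟨hxi, A, B, hAB, hA⟩ := List.find?_eq_some_iff_append.1 hx
  have hwAB : ∀ l ∈ A ++ x :: B, l.1 ≤ i ∧ (l.1 = i → l.2 = true) := hAB ▸ hw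
  have hxi : x = (i, true) :=
    Prod.ext (of_decide_eq_true hxi) ((hwAB x (by simp)).2 (of_decide_eq_true hxi))
  subst hxi
  refine ⟨_, mk_mem_braidSub (L := A) fun l hl => ?_, _,
    mk_mem_iNonnegSubmonoid (L := B) fun l hl => hwAB l (by simp [hl]), ?_⟩
  · exact lt_of_le_of_ne (hwAB l (by simp [hl])).1 (by simpa using hA l hl)
  · rw [← FreeGroup.mk_toWord (x := w), hAB, ← List.singleton_append, ← FreeGroup.mul_mk,
      ← FreeGroup.mul_mk, map_mul, map_mul, mul_assoc]
    rfl

def expSum (n : ℕ) : BraidGroup n →* Multiplicative ℤ :=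
  PresentedGroup.toGroup (f := fun _ => Multiplicative.ofAdd 1) <| by
    rintro r (⟨i, j, -, rfl⟩ | ⟨i, j, -, rfl⟩) <;>
      simp only [map_mul, map_inv, FreeGroup.lift_apply_of] <;> group

theorem expSum_braidGen (i : Fin (n - 1)) : expSum n (braidGen i) = Multiplicative.ofAdd 1 :=
  PresentedGroup.toGroup.of _

theorem braidSub_one : braidSub n 1 = ⊥ :=
  Subgroup.closure_eq_bot_iff.2 fun _ ⟨j, hj, _⟩ => absurd hj (by omega)

theorem expSum_nonneg_of_mem_iNonnegSubmonoid {i : Fin (n - 1)} (hi : (i : ℕ) = 0)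
    {x : BraidGroup n} (hx : x ∈ iNonnegSubmonoid n i) : 0 ≤ (expSum n x).toAdd := by
  induction hx using Submonoid.closure_induction with
  | mem _ hx =>
    rcases hx with rfl | hg
    · rw [expSum_braidGen]
      exact zero_le_one
    · rw [hi, braidSub_one, Subgroup.coe_bot, Set.mem_singleton_iff] at hg
      simp [hg]
  | one => simp
  | mul _ _ _ _ hx hy => simpa using add_nonneg hx hy

theorem _root_.IsIPositive.notMem_commutator {i : Fin (n - 1)} (hi : (i : ℕ) = 0)
    {β : BraidGroup n} (hβ : IsIPositive β i) : β ∉ commutator (BraidGroup n) := by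
  intro hcomm
  obtain ⟨g, hg, y, hy, rfl⟩ := hβ.exists_eq_mul_braidGen_mul
  rw [hi, braidSub_one, Subgroup.mem_bot] at hg
  have hzero : expSum n (g * braidGen i * y) = 1 :=
    Abelianization.commutator_subset_ker (expSum n) hcomm
  have hpos := expSum_nonneg_of_mem_iNonnegSubmonoid hi hy
  rw [hg, map_mul, map_mul, map_one, one_mul, expSum_braidGen] at hzero
  have := congrArg Multiplicative.toAdd hzero
  simp only [toAdd_mul, toAdd_ofAdd, toAdd_one] at this
  omega

theorem _root_.IsIPositive.exists_commutator_lt {i : Fin (n - 1)} (hi : (i : ℕ) ≠ 0)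
    {β : BraidGroup n} (hβ : IsIPositive β i) :
    ∃ γ ∈ commutator (BraidGroup n), IsIPositive γ i ∧ IsIPositive (γ⁻¹ * β) i := by
  obtain ⟨g, hg, y, hy, rfl⟩ := hβ.exists_eq_mul_braidGen_mul
  set s := braidGen (n := n) i
  set t := braidGen (n := n) ⟨i - 1, by omega⟩
  have hrel : t * s * t = s * t * s := braidGen_braid (by simp only; omega)
  have ht : t ∈ braidSub n (i + 1) := braidGen_mem_braidSub (Fin.lt_def.2 (by simp only; omega))
  have hM : ∀ {h}, h ∈ braidSub n (i + 1) → h ∈ iNonnegSubmonoid n i :=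
    mem_iNonnegSubmonoid_of_mem_braidSub
  refine ⟨g * t⁻¹ * s * (g * t⁻¹)⁻¹ * t⁻¹, conj_mul_inv_mem_commutator_of_braid hrel _, ?_, ?_⟩
  · have hγ : g * t⁻¹ * s * (g * t⁻¹)⁻¹ * t⁻¹ = g * t⁻¹ * s * (t * g⁻¹ * t⁻¹) := by group
    rw [hγ]
    exact isIPositive_mul_braidGen_mul (hM (mul_mem hg (inv_mem ht)))
      (hM (mul_mem (mul_mem ht (inv_mem hg)) (inv_mem ht)))
  · have hγβ : (g * t⁻¹ * s * (g * t⁻¹)⁻¹ * t⁻¹)⁻¹ * (g * s * y) = t * g * s * (t⁻¹ * y) :=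
      calc (g * t⁻¹ * s * (g * t⁻¹)⁻¹ * t⁻¹)⁻¹ * (g * s * y)
          = t * g * (t⁻¹ * s⁻¹ * (t * s * t) * t⁻¹) * y := by group
        _ = t * g * s * (t⁻¹ * y) := by rw [hrel]; group
    rw [hγβ]
    exact isIPositive_mul_braidGen_mul (hM (mul_mem ht hg)) (mul_mem (hM (inv_mem ht)) hy)

theorem exists_commutator_dPos_dLt {β : BraidGroup n} (hβ : β ∈ commutator (BraidGroup n))
    (hpos : DPos β) : ∃ γ ∈ commutator (BraidGroup n), DPos γ ∧ DLt γ β := by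
  obtain ⟨i, hi⟩ := hpos
  have hi0 : (i : ℕ) ≠ 0 := fun h => hi.notMem_commutator h hβ
  obtain ⟨γ, hγ, hγpos, hγβ⟩ := hi.exists_commutator_lt hi0
  exact ⟨γ, hγ, ⟨i, hγpos⟩, ⟨i, hγβ⟩⟩

end BraidGroup

theorem stmt_15_general {n : ℕ}
    (hmul : ∀ a b : BraidGroup n, DPos a → DPos b → DPos (a * b))
    (htri : ∀ a : BraidGroup n,
      (a = 1 ∧ ¬DPos a ∧ ¬DPos a⁻¹) ∨ (DPos a ∧ a ≠ 1 ∧ ¬DPos a⁻¹) ∨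
      (DPos a⁻¹ ∧ a ≠ 1 ∧ ¬DPos a)) :
    (¬ ∃ β : BraidGroup n, β ∈ commutator (BraidGroup n) ∧ DPos β ∧
      ∀ γ : BraidGroup n, γ ∈ commutator (BraidGroup n) → DPos γ → γ = β ∨ DLt β γ) ∧
    ∀ f g : BraidGroup n, f ∈ commutator (BraidGroup n) → g ∈ commutator (BraidGroup n) →
      DLt f g → ∃ h : BraidGroup n, h ∈ commutator (BraidGroup n) ∧ DLt f h ∧ DLt h g := by
  have hone : ¬ DPos (1 : BraidGroup n) := by
    rcases htri 1 with ⟨-, h, -⟩ | ⟨-, h, -⟩ | ⟨-, h, -⟩ <;> first | exact h | exact absurd rfl h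
  refine ⟨fun ⟨β, hβ, hpos, hleast⟩ => ?_, fun f g hf hg hfg => ?_⟩
  · obtain ⟨γ, hγ, hγpos, hγβ⟩ := BraidGroup.exists_commutator_dPos_dLt hβ hpos
    rcases hleast γ hγ hγpos with rfl | hβγ
    · exact hone (by simpa [DLt] using hγβ)
    · exact hone (by simpa [DLt] using hmul _ _ hβγ hγβ)
  · obtain ⟨γ, hγ, hγpos, hγfg⟩ :=
      BraidGroup.exists_commutator_dPos_dLt (mul_mem (inv_mem hf) hg) hfg
    refine ⟨f * γ, mul_mem hf hγ, ?_, ?_⟩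
    · simpa [DLt] using hγpos
    · simpa [DLt, mul_assoc] using hγfg

/-- For `n ≥ 3`, the commutator subgroup `[B_n, B_n]` has no least positive element in the
Dehornoy ordering; hence the restricted order is dense. -/
theorem stmt_15 {n : ℕ} (hn : 3 ≤ n)
    (hmul : ∀ a b : BraidGroup n, DPos a → DPos b → DPos (a * b))
    (htri : ∀ a : BraidGroup n,
      (a = 1 ∧ ¬DPos a ∧ ¬DPos a⁻¹) ∨ (DPos a ∧ a ≠ 1 ∧ ¬DPos a⁻¹) ∨
      (DPos a⁻¹ ∧ a ≠ 1 ∧ ¬DPos a)) :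
    (¬ ∃ β : BraidGroup n, β ∈ commutator (BraidGroup n) ∧ DPos β ∧
      ∀ γ : BraidGroup n, γ ∈ commutator (BraidGroup n) → DPos γ → γ = β ∨ DLt β γ) ∧
    ∀ f g : BraidGroup n, f ∈ commutator (BraidGroup n) → g ∈ commutator (BraidGroup n) →
      DLt f g → ∃ h : BraidGroup n, h ∈ commutator (BraidGroup n) ∧ DLt f h ∧ DLt h g :=
  stmt_15_general hmul htri
end
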